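/- Let 𝒜 be an m-order n-dimensional strong M-tensor with a_{ii…i} = 1 for all i, let s = k = 1, let α_i, β_j ∈ [0,1], and suppose condition (7) holds. Then the spectral radii of the Jacobi-type iteration tensors satisfy ρ(M(ℰ₅)^{−1}ℱ₅) ≤ ρ(M(ℰ₂)^{−1}ℱ₂) ≤ ρ(M(ℰ₁)^{−1}ℱ₁). -/

import Mathlib

open scoped BigOperators

namespace MultilinearPaper

noncomputable section

/-- An `m`-order `n`-dimensional real tensor: the first index is separated and
the remaining `m - 1` indices are given as a function `Fin (m-1) → Fin n`. -/
abbrev Tensor (m n : ℕ) : Type := Fin n → (Fin (m - 1) → Fin n) → ℝ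

variable {m n : ℕ}

/-- The vector `𝒜 x^{m-1}` (real version):
`(𝒜 x^{m-1})_i = ∑_{i₂,…,i_m} a_{i i₂ … i_m} x_{i₂} ⋯ x_{i_m}`. -/
def tmul (A : Tensor m n) (x : Fin n → ℝ) : Fin n → ℝ :=
  fun i => ∑ f : Fin (m - 1) → Fin n, A i f * ∏ t, x (f t)

/-- The vector `𝒜 x^{m-1}` evaluated at a complex vector. -/
def tmulC (A : Tensor m n) (x : Fin n → ℂ) : Fin n → ℂ :=
  fun i => ∑ f : Fin (m - 1) → Fin n, (A i f : ℂ) * ∏ t, x (f t)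

/-- The identity tensor `𝓘`. -/
def idT (m n : ℕ) : Tensor m n :=
  fun i f => if ∀ t, f t = i then 1 else 0

/-- Entrywise nonnegativity of a tensor. -/
def TNonneg (A : Tensor m n) : Prop := ∀ i f, 0 ≤ A i f

/-- `lam` is an eigenvalue of `A`: there is `x ≠ 0` over `ℂ` with
`𝒜 x^{m-1} = lam • x^{[m-1]}`. -/
def IsEigenvalue (A : Tensor m n) (lam : ℂ) : Prop :=
  ∃ x : Fin n → ℂ, x ≠ 0 ∧ ∀ i, tmulC A x i = lam * (x i) ^ (m - 1)

/-- Spectral radius: supremum of moduli of eigenvalues. -/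
def rho (A : Tensor m n) : ℝ :=
  sSup {r : ℝ | ∃ lam : ℂ, IsEigenvalue A lam ∧ r = ‖lam‖}

/-- `A` is a strong M-tensor: `A = η 𝓘 - B` with `B ≥ 0` and `η > ρ(B)`. -/
def StrongM (A : Tensor m n) : Prop :=
  ∃ (η : ℝ) (B : Tensor m n), TNonneg B ∧ rho B < η ∧ A = η • idT m n - B

/-- Matrix–tensor product `(P𝓑)_{j i₂…i_m} = ∑_{j₂} P_{j j₂} b_{j₂ i₂ … i_m}`. -/
def mmul (P : Matrix (Fin n) (Fin n) ℝ) (A : Tensor m n) : Tensor m n :=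
  fun j f => ∑ j₂, P j j₂ * A j₂ f

/-- Majorization matrix `M(𝒜)_{ij} = a_{i j … j}`. -/
def maj (A : Tensor m n) : Matrix (Fin n) (Fin n) ℝ :=
  fun i j => A i (fun _ => j)

/-- `a_{i i … i} = 1` for all `i`. -/
def UnitDiag (A : Tensor m n) : Prop := ∀ i, A i (fun _ => i) = 1

/-- `L`: the negatives of the strictly lower triangular entries of `M(𝒜)`. -/
def Lmat (A : Tensor m n) : Matrix (Fin n) (Fin n) ℝ :=
  fun i j => if (j : ℕ) < (i : ℕ) then -maj A i j else 0

/-- `𝓛 = L𝓘`. -/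
def Ltens (A : Tensor m n) : Tensor m n := mmul (Lmat A) (idT m n)

/-- `𝓕 = 𝓘 - 𝓛 - 𝒜`. -/
def Ftens (A : Tensor m n) : Tensor m n := idT m n - Ltens A - A

/-- The matrix `S_α^s`, with `(S_α^s)_{i,i+s} = -α_i a_{i(i+s)…(i+s)}`. -/
def Smat (A : Tensor m n) (α : Fin n → ℝ) (s : ℕ) : Matrix (Fin n) (Fin n) ℝ :=
  fun i j => if (j : ℕ) = (i : ℕ) + s then -(α i * maj A i j) else 0

/-- The matrix `K_β^k`, with `(K_β^k)_{i,i-k} = -β_i a_{i(i-k)…(i-k)}`. -/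
def Kmat (A : Tensor m n) (β : Fin n → ℝ) (k : ℕ) : Matrix (Fin n) (Fin n) ℝ :=
  fun i j => if (i : ℕ) = (j : ℕ) + k then -(β i * maj A i j) else 0

/-- The preconditioner `P_{αβ}(s,k) = I + S_α^s + K_β^k`. -/
def Pmat (A : Tensor m n) (α β : Fin n → ℝ) (s k : ℕ) : Matrix (Fin n) (Fin n) ℝ :=
  1 + Smat A α s + Kmat A β k

/-- The preconditioned tensor `𝒜_{αβ}(s,k) = P_{αβ}(s,k) 𝒜`. -/
def precond (A : Tensor m n) (α β : Fin n → ℝ) (s k : ℕ) : Tensor m n :=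
  mmul (Pmat A α β s k) A

/- Jacobi-type splittings. -/

def E1 (A : Tensor m n) (α β : Fin n → ℝ) (s k : ℕ) : Tensor m n :=
  mmul (Pmat A α β s k) (idT m n)

def F1 (A : Tensor m n) (α β : Fin n → ℝ) (s k : ℕ) : Tensor m n :=
  mmul (Pmat A α β s k) (Ltens A + Ftens A)

def F2 (A : Tensor m n) (α β : Fin n → ℝ) (s k : ℕ) : Tensor m n :=
  mmul (Pmat A α β s k) (Ltens A + Ftens A) - mmul (Smat A α s + Kmat A β k) (idT m n)

def F3 (A : Tensor m n) (α : Fin n → ℝ) (s : ℕ) : Tensor m n :=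
  mmul (1 + Smat A α s) (Ltens A + Ftens A) - mmul (Smat A α s) (idT m n)

def F4 (A : Tensor m n) (β : Fin n → ℝ) (k : ℕ) : Tensor m n :=
  mmul (1 + Kmat A β k) (Ltens A + Ftens A) - mmul (Kmat A β k) (idT m n)

/-- `S`: the matrix `S_α^1` with all parameters equal to `1`. -/
def Sfull (A : Tensor m n) : Matrix (Fin n) (Fin n) ℝ := Smat A (fun _ => 1) 1

/-- `K`: the matrix `K_β^1` with all parameters equal to `1`. -/
def Kfull (A : Tensor m n) : Matrix (Fin n) (Fin n) ℝ := Kmat A (fun _ => 1) 1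

/-- `𝓛′` with `𝓛 = K𝓘 + 𝓛′`. -/
def Lprime (A : Tensor m n) : Tensor m n := Ltens A - mmul (Kfull A) (idT m n)

/-- `𝓕′` with `𝓕 = S𝓘 + 𝓕′`. -/
def Fprime (A : Tensor m n) : Tensor m n := Ftens A - mmul (Sfull A) (idT m n)

/-- `ℰ₅ = (I - S_α K - K_β S)𝓘`. -/
def E5 (A : Tensor m n) (α β : Fin n → ℝ) : Tensor m n :=
  mmul (1 - Smat A α 1 * Kfull A - Kmat A β 1 * Sfull A) (idT m n)

/-- `ℱ₅ = 𝓛 + 𝓕 - (S_α + K_β)𝓘 + S_α(𝓛′ + 𝓕) + K_β(𝓛 + 𝓕′)`. -/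
def F5 (A : Tensor m n) (α β : Fin n → ℝ) : Tensor m n :=
  Ltens A + Ftens A - mmul (Smat A α 1 + Kmat A β 1) (idT m n)
    + mmul (Smat A α 1) (Lprime A + Ftens A) + mmul (Kmat A β 1) (Ltens A + Fprime A)

def finShiftUp (i : Fin n) (s : ℕ) (h : (i : ℕ) + s < n) : Fin n := ⟨(i : ℕ) + s, h⟩

def finShiftDown (i : Fin n) (k : ℕ) : Fin n :=
  ⟨(i : ℕ) - k, lt_of_le_of_lt (Nat.sub_le _ _) i.isLt⟩

/-- The `i`-th quantity appearing in conditions (7) and (11):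
`α_i a_{i(i+k)…(i+k)} a_{(i+k)i…i} + β_i a_{i(i-k)…(i-k)} a_{(i-k)i…i}`,
with each term dropped when its index is out of range. -/
def condExpr (A : Tensor m n) (α β : Fin n → ℝ) (k : ℕ) (i : Fin n) : ℝ :=
  (if h : (i : ℕ) + k < n then
      α i * maj A i (finShiftUp i k h) * maj A (finShiftUp i k h) i
    else 0) +
  (if k ≤ (i : ℕ) then
      β i * maj A i (finShiftDown i k) * maj A (finShiftDown i k) i
    else 0)

/-- Conditions (7) (for `k = 1`) and (11) (for general `k = s`). -/
def Cond (A : Tensor m n) (α β : Fin n → ℝ) (k : ℕ) : Prop :=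
  ∀ i : Fin n, 0 < condExpr A α β k i ∧ condExpr A α β k i < 1

/- Gauss–Seidel-type splittings. -/

/-- The diagonal part of `M(T)` as a matrix. -/
def DmatOf (T : Tensor m n) : Matrix (Fin n) (Fin n) ℝ :=
  fun i j => if i = j then maj T i j else 0

/-- The strictly lower triangular part of `M(T)` as a matrix. -/
def LmatOf (T : Tensor m n) : Matrix (Fin n) (Fin n) ℝ :=
  fun i j => if (j : ℕ) < (i : ℕ) then maj T i j else 0

/-- `𝓓_α = D_α 𝓘` from `S_α^s 𝓛 = 𝓓_α + 𝓛_α + 𝓕_α`. -/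
def Dalpha (A : Tensor m n) (α : Fin n → ℝ) (s : ℕ) : Tensor m n :=
  mmul (DmatOf (mmul (Smat A α s) (Ltens A))) (idT m n)

def Lalpha (A : Tensor m n) (α : Fin n → ℝ) (s : ℕ) : Tensor m n :=
  mmul (LmatOf (mmul (Smat A α s) (Ltens A))) (idT m n)

def Falpha (A : Tensor m n) (α : Fin n → ℝ) (s : ℕ) : Tensor m n :=
  mmul (Smat A α s) (Ltens A) - Dalpha A α s - Lalpha A α s

/-- `𝓓_β = D_β 𝓘` from `K_β^k 𝓕 = 𝓓_β + 𝓛_β + 𝓕_β`. -/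
def Dbeta (A : Tensor m n) (β : Fin n → ℝ) (k : ℕ) : Tensor m n :=
  mmul (DmatOf (mmul (Kmat A β k) (Ftens A))) (idT m n)

def Lbeta (A : Tensor m n) (β : Fin n → ℝ) (k : ℕ) : Tensor m n :=
  mmul (LmatOf (mmul (Kmat A β k) (Ftens A))) (idT m n)

def Fbeta (A : Tensor m n) (β : Fin n → ℝ) (k : ℕ) : Tensor m n :=
  mmul (Kmat A β k) (Ftens A) - Dbeta A β k - Lbeta A β k

def M1 (A : Tensor m n) (α β : Fin n → ℝ) (s k : ℕ) : Tensor m n :=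
  mmul (Pmat A α β s k) (idT m n - Ltens A)

def N1 (A : Tensor m n) (α β : Fin n → ℝ) (s k : ℕ) : Tensor m n :=
  mmul (Pmat A α β s k) (Ftens A)

def M2 (A : Tensor m n) (α β : Fin n → ℝ) (s k : ℕ) : Tensor m n :=
  idT m n - Ltens A + mmul (Kmat A β k) (idT m n) - mmul (Kmat A β k) (Ltens A)
    - Dalpha A α s - Lalpha A α s - Dbeta A β k - Lbeta A β k

def N2 (A : Tensor m n) (α β : Fin n → ℝ) (s k : ℕ) : Tensor m n :=
  Ftens A - mmul (Smat A α s) (idT m n) + mmul (Smat A α s) (Ftens A)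
    + Falpha A α s + Fbeta A β k

def M3 (A : Tensor m n) (α : Fin n → ℝ) (s : ℕ) : Tensor m n :=
  idT m n - Ltens A - Dalpha A α s - Lalpha A α s

def N3 (A : Tensor m n) (α : Fin n → ℝ) (s : ℕ) : Tensor m n :=
  Ftens A - mmul (Smat A α s) (idT m n) + mmul (Smat A α s) (Ftens A) + Falpha A α s

def M4 (A : Tensor m n) (β : Fin n → ℝ) (k : ℕ) : Tensor m n :=
  mmul (1 + Kmat A β k) (idT m n - Ltens A) - Dbeta A β k - Lbeta A β k

def N4 (A : Tensor m n) (β : Fin n → ℝ) (k : ℕ) : Tensor m n :=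
  Ftens A + Fbeta A β k

/- Preconditioned SOR. -/

def Dab (A : Tensor m n) (α β : Fin n → ℝ) (s k : ℕ) : Tensor m n :=
  idT m n - Dalpha A α s - Dbeta A β k

def Lab (A : Tensor m n) (α β : Fin n → ℝ) (s k : ℕ) : Tensor m n :=
  Ltens A - mmul (Kmat A β k) (idT m n) + mmul (Kmat A β k) (Ltens A)
    + Lalpha A α s + Lbeta A β k

def Fab (A : Tensor m n) (α β : Fin n → ℝ) (s k : ℕ) : Tensor m n :=
  Ftens A - mmul (Smat A α s) (idT m n) + mmul (Smat A α s) (Ftens A)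
    + Falpha A α s + Fbeta A β k

def Eomega (A : Tensor m n) (α β : Fin n → ℝ) (s k : ℕ) (ω : ℝ) : Tensor m n :=
  (1 / ω) • (Dab A α β s k - ω • Lab A α β s k)

def Fomega (A : Tensor m n) (α β : Fin n → ℝ) (s k : ℕ) (ω : ℝ) : Tensor m n :=
  (1 / ω) • ((1 - ω) • Dab A α β s k + ω • Fab A α β s k)

/-- Preconditioned SOR iteration tensor `ℋ_{αβ}(ω)`. -/
def Hsor (A : Tensor m n) (α β : Fin n → ℝ) (s k : ℕ) (ω : ℝ) : Tensor m n :=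
  mmul (maj (Eomega A α β s k ω))⁻¹ (Fomega A α β s k ω)

/-- Unpreconditioned SOR iteration tensor `ℋ(ω) = M(𝓘-ω𝓛)^{-1}((1-ω)𝓘+ω𝓕)`. -/
def Hu (A : Tensor m n) (ω : ℝ) : Tensor m n :=
  mmul (maj (idT m n - ω • Ltens A))⁻¹ ((1 - ω) • idT m n + ω • Ftens A)

/-- A tensor is reducible if there is a nonempty proper index subset `I` with
`a_{i₁ i₂ … i_m} = 0` whenever `i₁ ∈ I` and `i₂, …, i_m ∉ I`. -/
def TReducible (A : Tensor m n) : Prop :=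
  ∃ I : Set (Fin n), I.Nonempty ∧ I ≠ Set.univ ∧
    ∀ i f, i ∈ I → (∀ t, f t ∉ I) → A i f = 0

/- ===================== auxiliary lemmas ===================== -/

section AuxBasic

variable {m n : ℕ}

lemma tmul_nonneg {T : Tensor m n} (hT : TNonneg T) {x : Fin n → ℝ}
    (hx : ∀ i, 0 ≤ x i) (i : Fin n) : 0 ≤ tmul T x i :=
  Finset.sum_nonneg fun f _ =>
    mul_nonneg (hT i f) (Finset.prod_nonneg fun t _ => hx _)

lemma tmul_mono_right {T : Tensor m n} (hT : TNonneg T) {x y : Fin n → ℝ}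
    (hx : ∀ i, 0 ≤ x i) (hxy : ∀ i, x i ≤ y i) (i : Fin n) :
    tmul T x i ≤ tmul T y i := by
  apply Finset.sum_le_sum
  intro f _
  exact mul_le_mul_of_nonneg_left
    (Finset.prod_le_prod (fun t _ => hx _) (fun t _ => hxy _)) (hT i f)

lemma tmul_mono_left {T T' : Tensor m n} (hle : ∀ i f, T i f ≤ T' i f)
    {x : Fin n → ℝ} (hx : ∀ i, 0 ≤ x i) (i : Fin n) :
    tmul T x i ≤ tmul T' x i := by
  apply Finset.sum_le_sum
  intro f _
  exact mul_le_mul_of_nonneg_right (hle i f)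
    (Finset.prod_nonneg fun t _ => hx _)

lemma tmul_smul_vec (T : Tensor m n) (c : ℝ) (x : Fin n → ℝ) (i : Fin n) :
    tmul T (fun j => c * x j) i = c ^ (m - 1) * tmul T x i := by
  unfold tmul
  rw [Finset.mul_sum]
  apply Finset.sum_congr rfl
  intro f _
  rw [Finset.prod_mul_distrib, Finset.prod_const]
  simp [Finset.card_univ]
  ring

lemma tmul_add (T T' : Tensor m n) (x : Fin n → ℝ) (i : Fin n) :
    tmul (T + T') x i = tmul T x i + tmul T' x i := by
  unfold tmul
  rw [← Finset.sum_add_distrib]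
  apply Finset.sum_congr rfl
  intro f _
  show (T i f + T' i f) * _ = _
  ring

lemma tmul_sub (T T' : Tensor m n) (x : Fin n → ℝ) (i : Fin n) :
    tmul (T - T') x i = tmul T x i - tmul T' x i := by
  unfold tmul
  rw [← Finset.sum_sub_distrib]
  apply Finset.sum_congr rfl
  intro f _
  show (T i f - T' i f) * _ = _
  ring

lemma tmul_smulT (c : ℝ) (T : Tensor m n) (x : Fin n → ℝ) (i : Fin n) :
    tmul (c • T) x i = c * tmul T x i := by
  unfold tmul
  rw [Finset.mul_sum]
  apply Finset.sum_congr rfl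
  intro f _
  show (c * T i f) * _ = _
  ring

lemma tmul_mmul (M : Matrix (Fin n) (Fin n) ℝ) (T : Tensor m n)
    (x : Fin n → ℝ) (i : Fin n) :
    tmul (mmul M T) x i = ∑ j, M i j * tmul T x j := by
  unfold tmul mmul
  simp only [Finset.sum_mul, Finset.mul_sum]
  rw [Finset.sum_comm]
  apply Finset.sum_congr rfl
  intro f _
  apply Finset.sum_congr rfl
  intro j _
  ring

lemma idT_apply_ne {i : Fin n} {f : Fin (m - 1) → Fin n}
    (hf : f ≠ fun _ => i) : idT m n i f = 0 := by
  rw [idT, if_neg]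
  intro h
  exact hf (funext h)

lemma tmul_idT (x : Fin n → ℝ) (i : Fin n) :
    tmul (idT m n) x i = x i ^ (m - 1) := by
  unfold tmul
  rw [Finset.sum_eq_single (fun _ => i)]
  · rw [idT, if_pos (fun _ => rfl), one_mul, Finset.prod_const]
    simp [Finset.card_univ]
  · intro f _ hf
    rw [idT_apply_ne hf, zero_mul]
  · simp

lemma tmulC_ofReal (T : Tensor m n) (z : Fin n → ℝ) (i : Fin n) :
    tmulC T (fun j => (z j : ℂ)) i = ((tmul T z i : ℝ) : ℂ) := by
  unfold tmulC tmul
  push_cast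
  rfl

lemma abs_tmulC_le {T : Tensor m n} (hT : TNonneg T) (y : Fin n → ℂ) (i : Fin n) :
    ‖tmulC T y i‖ ≤ tmul T (fun j => ‖y j‖) i := by
  unfold tmulC tmul
  refine (norm_sum_le _ _).trans ?_
  apply Finset.sum_le_sum
  intro f _
  rw [norm_mul, norm_prod, Complex.norm_real, Real.norm_eq_abs, abs_of_nonneg (hT i f)]

lemma tmul_continuous (T : Tensor m n) (i : Fin n) :
    Continuous fun z : Fin n → ℝ => tmul T z i := by
  unfold tmul
  exact continuous_finset_sum _ fun f _ =>
    continuous_const.mul (continuous_finset_prod _ fun t _ => continuous_apply (f t))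

end AuxBasic

section AuxRho

variable {m n : ℕ}

lemma abs_eigen_le (hn : 0 < n) {T : Tensor m n} {lam : ℂ}
    (h : IsEigenvalue T lam) :
    ‖lam‖ ≤ ∑ i, ∑ f : Fin (m - 1) → Fin n, |T i f| := by
  haveI : Nonempty (Fin n) := ⟨⟨0, hn⟩⟩
  obtain ⟨y, hy0, hy⟩ := h
  set z : Fin n → ℝ := fun i => ‖y i‖ with hzdef
  obtain ⟨i₀, -, hmax⟩ := Finset.exists_max_image Finset.univ z Finset.univ_nonempty
  have hzpos : 0 < z i₀ := by
    obtain ⟨j, hj⟩ := Function.ne_iff.mp hy0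
    exact lt_of_lt_of_le (norm_pos_iff.mpr hj) (hmax j (Finset.mem_univ j))
  have key : ‖lam‖ * z i₀ ^ (m - 1) ≤
      (∑ f : Fin (m - 1) → Fin n, |T i₀ f|) * z i₀ ^ (m - 1) := by
    have h1 : ‖lam‖ * z i₀ ^ (m - 1) = ‖tmulC T y i₀‖ := by
      rw [hy i₀, norm_mul, norm_pow]
    rw [h1]
    calc ‖tmulC T y i₀‖
        ≤ ∑ f : Fin (m - 1) → Fin n, ‖(T i₀ f : ℂ) * ∏ t, y (f t)‖ :=
          norm_sum_le _ _
      _ ≤ ∑ f : Fin (m - 1) → Fin n, |T i₀ f| * z i₀ ^ (m - 1) := by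
          apply Finset.sum_le_sum
          intro f _
          rw [norm_mul, norm_prod, Complex.norm_real, Real.norm_eq_abs]
          refine mul_le_mul_of_nonneg_left ?_ (abs_nonneg _)
          calc ∏ t, ‖y (f t)‖ ≤ ∏ _t : Fin (m - 1), z i₀ :=
                Finset.prod_le_prod (fun t _ => norm_nonneg _)
                  (fun t _ => hmax (f t) (Finset.mem_univ _))
            _ = z i₀ ^ (m - 1) := by rw [Finset.prod_const]; simp [Finset.card_univ]
      _ = (∑ f : Fin (m - 1) → Fin n, |T i₀ f|) * z i₀ ^ (m - 1) := by
          rw [Finset.sum_mul]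
  have h2 : ‖lam‖ ≤ ∑ f : Fin (m - 1) → Fin n, |T i₀ f| :=
    le_of_mul_le_mul_right key (pow_pos hzpos _)
  refine h2.trans ?_
  exact Finset.single_le_sum (f := fun i => ∑ f : Fin (m - 1) → Fin n, |T i f|)
    (fun i _ => Finset.sum_nonneg fun f _ => abs_nonneg _) (Finset.mem_univ i₀)

lemma bddAbove_rhoSet (hn : 0 < n) (T : Tensor m n) :
    BddAbove {r : ℝ | ∃ lam : ℂ, IsEigenvalue T lam ∧ r = ‖lam‖} := by
  refine ⟨∑ i, ∑ f : Fin (m - 1) → Fin n, |T i f|, ?_⟩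
  rintro r ⟨lam, hl, rfl⟩
  exact abs_eigen_le hn hl

lemma rho_nonneg (T : Tensor m n) : 0 ≤ rho T := by
  apply Real.sSup_nonneg
  rintro r ⟨lam, -, rfl⟩
  exact norm_nonneg _

lemma abs_le_rho (hn : 0 < n) {T : Tensor m n} {lam : ℂ}
    (h : IsEigenvalue T lam) : ‖lam‖ ≤ rho T :=
  le_csSup (bddAbove_rhoSet hn T) ⟨lam, h, rfl⟩

lemma rho_le_of_pos_vec (hn : 0 < n) {T : Tensor m n} (hT : TNonneg T)
    {x : Fin n → ℝ} (hx : ∀ i, 0 < x i) {μ : ℝ}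
    (h : ∀ i, tmul T x i ≤ μ * x i ^ (m - 1)) : rho T ≤ μ := by
  haveI : Nonempty (Fin n) := ⟨⟨0, hn⟩⟩
  have hμ : 0 ≤ μ := by
    have i : Fin n := ⟨0, hn⟩
    have h1 : 0 ≤ tmul T x i := tmul_nonneg hT (fun j => (hx j).le) i
    nlinarith [h i, pow_pos (hx i) (m - 1)]
  apply Real.sSup_le _ hμ
  rintro r ⟨lam, ⟨y, hy0, hy⟩, rfl⟩
  set z : Fin n → ℝ := fun i => ‖y i‖ with hzdef
  obtain ⟨i₀, -, hmax⟩ := Finset.exists_max_image Finset.univ (fun i => z i / x i)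
    Finset.univ_nonempty
  set c : ℝ := z i₀ / x i₀ with hcdef
  have hc : ∀ j, z j ≤ c * x j := fun j => by
    have := hmax j (Finset.mem_univ j)
    calc z j = z j / x j * x j := (div_mul_cancel₀ (z j) (hx j).ne').symm
      _ ≤ c * x j := mul_le_mul_of_nonneg_right this (hx j).le
  have hc0 : 0 < c := by
    obtain ⟨j, hj⟩ := Function.ne_iff.mp hy0
    have hzj : 0 < z j := norm_pos_iff.mpr hj
    have := hmax j (Finset.mem_univ j)
    have hzx : 0 < z j / x j := div_pos hzj (hx j)
    linarith
  have hzi₀ : z i₀ = c * x i₀ := by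
    rw [hcdef, div_mul_cancel₀ _ (hx i₀).ne']
  have key : ‖lam‖ * z i₀ ^ (m - 1) ≤ μ * z i₀ ^ (m - 1) := by
    calc ‖lam‖ * z i₀ ^ (m - 1) = ‖tmulC T y i₀‖ := by
          rw [hy i₀, norm_mul, norm_pow]
      _ ≤ tmul T z i₀ := abs_tmulC_le hT y i₀
      _ ≤ tmul T (fun j => c * x j) i₀ :=
          tmul_mono_right hT (fun j => norm_nonneg _) hc i₀
      _ = c ^ (m - 1) * tmul T x i₀ := tmul_smul_vec T c x i₀
      _ ≤ c ^ (m - 1) * (μ * x i₀ ^ (m - 1)) :=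
          mul_le_mul_of_nonneg_left (h i₀) (pow_nonneg hc0.le _)
      _ = μ * (c * x i₀) ^ (m - 1) := by rw [mul_pow]; ring
      _ = μ * z i₀ ^ (m - 1) := by rw [hzi₀]
  have hzi₀pos : 0 < z i₀ ^ (m - 1) := pow_pos (by rw [hzi₀]; exact mul_pos hc0 (hx i₀)) _
  exact le_of_mul_le_mul_right key hzi₀pos

end AuxRho

section AuxCW

variable {m n : ℕ}

/-- Feasible Collatz–Wielandt values. -/
def Feas (T : Tensor m n) : Set ℝ :=
  {t | 0 ≤ t ∧ ∃ z : Fin n → ℝ, (∀ i, 0 ≤ z i) ∧ (∑ i, z i = 1) ∧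
    ∀ i, t * z i ^ (m - 1) ≤ tmul T z i}

/-- Collatz–Wielandt value. -/
def tstar (T : Tensor m n) : ℝ := sSup (Feas T)

lemma mem_Feas_norm {T : Tensor m n} {t : ℝ} (ht : 0 ≤ t) {z : Fin n → ℝ}
    (hz0 : ∀ i, 0 ≤ z i) (hzs : 0 < ∑ i, z i)
    (h : ∀ i, t * z i ^ (m - 1) ≤ tmul T z i) : t ∈ Feas T := by
  refine ⟨ht, fun j => (∑ i, z i)⁻¹ * z j,
    fun j => mul_nonneg (inv_nonneg.2 hzs.le) (hz0 j), ?_, ?_⟩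
  · rw [← Finset.mul_sum, inv_mul_cancel₀ hzs.ne']
  · intro i
    rw [tmul_smul_vec]
    calc t * ((∑ i, z i)⁻¹ * z i) ^ (m - 1)
        = (∑ i, z i)⁻¹ ^ (m - 1) * (t * z i ^ (m - 1)) := by ring
      _ ≤ (∑ i, z i)⁻¹ ^ (m - 1) * tmul T z i :=
          mul_le_mul_of_nonneg_left (h i) (by positivity)

lemma zero_mem_Feas (hn : 0 < n) {T : Tensor m n} (hT : TNonneg T) :
    (0 : ℝ) ∈ Feas T := by
  apply mem_Feas_norm le_rfl (z := fun _ => 1) (fun _ => zero_le_one)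
  · simp only [Finset.sum_const, Finset.card_univ, Fintype.card_fin, nsmul_eq_mul,
      mul_one]
    exact_mod_cast hn
  · intro i
    rw [zero_mul]
    exact tmul_nonneg hT (fun _ => zero_le_one) i

lemma Feas_nonempty (hn : 0 < n) {T : Tensor m n} (hT : TNonneg T) :
    (Feas T).Nonempty := ⟨0, zero_mem_Feas hn hT⟩

lemma le_one_of_simplex {z : Fin n → ℝ} (hz0 : ∀ i, 0 ≤ z i)
    (hzs : ∑ i, z i = 1) (j : Fin n) : z j ≤ 1 := by
  calc z j ≤ ∑ i, z i := Finset.single_le_sum (fun i _ => hz0 i) (Finset.mem_univ j)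
    _ = 1 := hzs

lemma prod_le_pow_bound {z : Fin n → ℝ} (hz : ∀ i, 0 ≤ z i) {b : ℝ}
    (hb : ∀ i, z i ≤ b) (f : Fin (m - 1) → Fin n) :
    ∏ t, z (f t) ≤ b ^ (m - 1) := by
  calc ∏ t, z (f t) ≤ ∏ _t : Fin (m - 1), b :=
      Finset.prod_le_prod (fun t _ => hz _) (fun t _ => hb _)
    _ = b ^ (m - 1) := by rw [Finset.prod_const]; simp [Finset.card_univ]

lemma bddAbove_Feas (hn : 0 < n) {T : Tensor m n} (hT : TNonneg T) :
    BddAbove (Feas T) := by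
  haveI : Nonempty (Fin n) := ⟨⟨0, hn⟩⟩
  refine ⟨∑ i, ∑ f : Fin (m - 1) → Fin n, T i f, ?_⟩
  rintro t ⟨ht0, z, hz0, hzs, h⟩
  obtain ⟨i₀, -, hmax⟩ := Finset.exists_max_image Finset.univ z Finset.univ_nonempty
  have hzi₀ : 0 < z i₀ := by
    rcases lt_or_ge 0 (z i₀) with h1 | h1
    · exact h1
    · exfalso
      have hz00 : ∀ j, z j = 0 := fun j =>
        le_antisymm (le_trans (hmax j (Finset.mem_univ j)) h1) (hz0 j)
      rw [Finset.sum_congr rfl (fun j _ => hz00 j), Finset.sum_const] at hzs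
      simp at hzs
  have key : t * z i₀ ^ (m - 1) ≤
      (∑ i, ∑ f : Fin (m - 1) → Fin n, T i f) * z i₀ ^ (m - 1) := by
    refine (h i₀).trans ?_
    calc tmul T z i₀ ≤ ∑ f : Fin (m - 1) → Fin n, T i₀ f * z i₀ ^ (m - 1) :=
        Finset.sum_le_sum fun f _ => mul_le_mul_of_nonneg_left
          (prod_le_pow_bound hz0 (fun j => hmax j (Finset.mem_univ j)) f) (hT i₀ f)
      _ = (∑ f : Fin (m - 1) → Fin n, T i₀ f) * z i₀ ^ (m - 1) := by
          rw [Finset.sum_mul]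
      _ ≤ (∑ i, ∑ f : Fin (m - 1) → Fin n, T i f) * z i₀ ^ (m - 1) := by
          refine mul_le_mul_of_nonneg_right ?_ (pow_nonneg hzi₀.le _)
          exact Finset.single_le_sum
            (f := fun i => ∑ f : Fin (m - 1) → Fin n, T i f)
            (fun i _ => Finset.sum_nonneg fun f _ => hT i f) (Finset.mem_univ i₀)
  exact le_of_mul_le_mul_right key (pow_pos hzi₀ _)

lemma tstar_nonneg (hn : 0 < n) {T : Tensor m n} (hT : TNonneg T) :
    0 ≤ tstar T :=
  le_csSup (bddAbove_Feas hn hT) (zero_mem_Feas hn hT)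

lemma tstar_mono (hn : 0 < n) {T T' : Tensor m n} (hT : TNonneg T)
    (hle : ∀ i f, T i f ≤ T' i f) : tstar T ≤ tstar T' := by
  have hT' : TNonneg T' := fun i f => le_trans (hT i f) (hle i f)
  apply csSup_le_csSup (bddAbove_Feas hn hT') (Feas_nonempty hn hT)
  rintro t ⟨ht0, z, hz0, hzs, h⟩
  exact ⟨ht0, z, hz0, hzs, fun i => (h i).trans (tmul_mono_left hle hz0 i)⟩

lemma isCompact_simplex :
    IsCompact {w : Fin n → ℝ | (∀ i, 0 ≤ w i) ∧ ∑ i, w i = 1} := by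
  have hsub : {w : Fin n → ℝ | (∀ i, 0 ≤ w i) ∧ ∑ i, w i = 1} ⊆
      Set.pi Set.univ (fun _ : Fin n => Set.Icc (0:ℝ) 1) := by
    rintro w ⟨h0, h1⟩ i _
    exact ⟨h0 i, le_one_of_simplex h0 h1 i⟩
  refine IsCompact.of_isClosed_subset
    (isCompact_univ_pi fun _ => isCompact_Icc) ?_ hsub
  have h1 : IsClosed {w : Fin n → ℝ | ∀ i, 0 ≤ w i} := by
    rw [Set.setOf_forall]
    exact isClosed_iInter fun i => isClosed_le continuous_const (continuous_apply i)
  have h2 : IsClosed {w : Fin n → ℝ | ∑ i, w i = 1} :=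
    isClosed_eq (continuous_finset_sum _ fun i _ => continuous_apply i)
      continuous_const
  exact h1.inter h2

lemma tstar_attained (hn : 0 < n) {T : Tensor m n} (hT : TNonneg T) :
    ∃ z : Fin n → ℝ, (∀ i, 0 ≤ z i) ∧ (∑ i, z i = 1) ∧
      ∀ i, tstar T * z i ^ (m - 1) ≤ tmul T z i := by
  haveI : Nonempty (Fin n) := ⟨⟨0, hn⟩⟩
  have hne := Feas_nonempty hn hT
  have hbdd := bddAbove_Feas hn hT
  have hsel : ∀ k : ℕ, ∃ t ∈ Feas T, tstar T - 1 / (k + 1) < t := by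
    intro k
    apply exists_lt_of_lt_csSup hne
    have : (0:ℝ) < 1 / (k + 1) := by positivity
    unfold tstar; linarith
  choose t ht hlt using hsel
  choose z hz0 hzs hzf using fun k => (ht k).2
  have hΔc : IsCompact {w : Fin n → ℝ | (∀ i, 0 ≤ w i) ∧ ∑ i, w i = 1} :=
    isCompact_simplex
  obtain ⟨zb, hzbΔ, φ, hφ, hconv⟩ := hΔc.tendsto_subseq
    (x := fun k => z k) (fun k => ⟨hz0 k, hzs k⟩)
  refine ⟨zb, hzbΔ.1, hzbΔ.2, fun i => ?_⟩
  have hφtop : Filter.Tendsto φ Filter.atTop Filter.atTop := hφ.tendsto_atTop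
  have hone : Filter.Tendsto (fun k : ℕ => 1 / ((φ k : ℝ) + 1)) Filter.atTop (nhds 0) :=
    tendsto_one_div_add_atTop_nhds_zero_nat.comp hφtop
  have htt : Filter.Tendsto (fun k => t (φ k)) Filter.atTop (nhds (tstar T)) := by
    apply tendsto_of_tendsto_of_tendsto_of_le_of_le
      (g := fun k : ℕ => tstar T - 1 / ((φ k : ℝ) + 1)) (h := fun _ => tstar T)
    · have := Filter.Tendsto.sub (tendsto_const_nhds (x := tstar T)
        (f := Filter.atTop (α := ℕ))) hone
      simpa using this
    · exact tendsto_const_nhds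
    · exact fun k => (hlt (φ k)).le
    · exact fun k => le_csSup hbdd (ht (φ k))
  have h1 : Filter.Tendsto (fun k => t (φ k) * z (φ k) i ^ (m - 1))
      Filter.atTop (nhds (tstar T * zb i ^ (m - 1))) := by
    apply Filter.Tendsto.mul htt
    exact (((continuous_apply i).tendsto zb).comp hconv).pow _
  have h2 : Filter.Tendsto (fun k => tmul T (z (φ k)) i)
      Filter.atTop (nhds (tmul T zb i)) :=
    ((tmul_continuous T i).tendsto zb).comp hconv
  exact le_of_tendsto_of_tendsto' h1 h2 (fun k => hzf (φ k) i)

lemma tmul_gain {T : Tensor m n} (hT : TNonneg T) {z z' : Fin n → ℝ}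
    (hz : ∀ i, 0 ≤ z i) (hzz : ∀ i, z i ≤ z' i) (j : Fin n)
    (f₀ : Fin (m - 1) → Fin n) :
    tmul T z j + T j f₀ * (∏ t, z' (f₀ t) - ∏ t, z (f₀ t)) ≤ tmul T z' j := by
  have hterm : ∀ f : Fin (m - 1) → Fin n,
      0 ≤ T j f * (∏ t, z' (f t) - ∏ t, z (f t)) := fun f =>
    mul_nonneg (hT j f) (sub_nonneg.2 (Finset.prod_le_prod
      (fun t _ => hz _) (fun t _ => hzz _)))
  have h1 : T j f₀ * (∏ t, z' (f₀ t) - ∏ t, z (f₀ t)) ≤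
      ∑ f : Fin (m - 1) → Fin n, T j f * (∏ t, z' (f t) - ∏ t, z (f t)) :=
    Finset.single_le_sum (fun f _ => hterm f) (Finset.mem_univ f₀)
  have h2 : ∑ f : Fin (m - 1) → Fin n, T j f * (∏ t, z' (f t) - ∏ t, z (f t)) =
      tmul T z' j - tmul T z j := by
    unfold tmul
    rw [← Finset.sum_sub_distrib]
    apply Finset.sum_congr rfl
    intro f _
    ring
  linarith [h1.trans_eq h2]

lemma prod_ite_point {k : ℕ} (t₀ : Fin k) (w : Fin n → ℝ) (i j : Fin n) :
    ∏ s : Fin k, w (if s = t₀ then i else j) = w i * w j ^ (k - 1) := by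
  have hcongr : ∀ s ∈ Finset.univ.erase t₀,
      w (if s = t₀ then i else j) = w j := fun s hs => by
    rw [if_neg (Finset.ne_of_mem_erase hs)]
  rw [← Finset.mul_prod_erase Finset.univ (fun s => w (if s = t₀ then i else j))
    (Finset.mem_univ t₀), if_pos rfl, Finset.prod_congr rfl hcongr,
    Finset.prod_const, Finset.card_erase_of_mem (Finset.mem_univ t₀),
    Finset.card_univ, Fintype.card_fin]

lemma single_term_le_tmul {T : Tensor m n} (hT : TNonneg T)
    {z : Fin n → ℝ} (hz : ∀ i, 0 ≤ z i) (i : Fin n) (f₀ : Fin (m - 1) → Fin n) :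
    T i f₀ * ∏ t, z (f₀ t) ≤ tmul T z i :=
  Finset.single_le_sum (f := fun f => T i f * ∏ t, z (f t))
    (fun f _ => mul_nonneg (hT i f) (Finset.prod_nonneg fun t _ => hz _))
    (Finset.mem_univ f₀)

lemma exists_inv_card_le (hn : 0 < n) {z : Fin n → ℝ} (hzs : ∑ i, z i = 1)
    (hz0 : ∀ i, 0 ≤ z i) : ∃ j, (n:ℝ)⁻¹ ≤ z j ∧ 0 < z j := by
  haveI : Nonempty (Fin n) := ⟨⟨0, hn⟩⟩
  have hn' : (0:ℝ) < n := by exact_mod_cast hn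
  obtain ⟨j, -, hmax⟩ := Finset.exists_max_image Finset.univ z Finset.univ_nonempty
  have h1 : (1:ℝ) ≤ n * z j := by
    calc (1:ℝ) = ∑ i, z i := hzs.symm
      _ ≤ ∑ _i : Fin n, z j := Finset.sum_le_sum fun i _ => hmax i (Finset.mem_univ i)
      _ = n * z j := by rw [Finset.sum_const]; simp [Finset.card_univ]
  have h2 : (n:ℝ)⁻¹ ≤ z j := by
    rw [← one_div]
    rw [div_le_iff₀ hn']
    linarith
  exact ⟨j, h2, lt_of_lt_of_le (by positivity) h2⟩

lemma pow_add_le_aux (k : ℕ) {a e : ℝ} (ha0 : 0 ≤ a) (ha1 : a ≤ 1)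
    (he0 : 0 ≤ e) (he1 : e ≤ 1) :
    (a + e) ^ k ≤ a ^ k + ((k : ℝ) * 2 ^ k) * e := by
  induction k with
  | zero => simp
  | succ k ih =>
    have h2 : (0:ℝ) ≤ a ^ k := pow_nonneg ha0 k
    have h3 : a ^ k ≤ 1 := pow_le_one₀ ha0 ha1
    have h5 : (0:ℝ) ≤ (k : ℝ) * 2 ^ k := by positivity
    have h6 : (1:ℝ) ≤ 2 ^ k := one_le_pow₀ (by norm_num)
    have h7 : (a + e) ^ (k + 1) = (a + e) ^ k * (a + e) := pow_succ _ _
    have h8 : (a + e) ^ k * (a + e) ≤ (a ^ k + ((k:ℝ) * 2 ^ k) * e) * (a + e) :=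
      mul_le_mul_of_nonneg_right ih (by linarith)
    have h9 : (a ^ k + ((k:ℝ) * 2 ^ k) * e) * (a + e) ≤
        a ^ (k + 1) + (((k:ℝ) + 1) * 2 ^ (k + 1)) * e := by
      have hp : a ^ (k + 1) = a ^ k * a := pow_succ _ _
      have hq : (2:ℝ) ^ (k+1) = 2 ^ k * 2 := pow_succ _ _
      have e1 : a ^ k * e ≤ e := by nlinarith
      have h5e : (0:ℝ) ≤ (k:ℝ) * 2 ^ k * e := mul_nonneg h5 he0
      have e2 : ((k:ℝ) * 2 ^ k * e) * a ≤ ((k:ℝ) * 2 ^ k * e) * 1 :=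
        mul_le_mul_of_nonneg_left ha1 h5e
      have e3 : ((k:ℝ) * 2 ^ k * e) * e ≤ ((k:ℝ) * 2 ^ k * e) * 1 :=
        mul_le_mul_of_nonneg_left he1 h5e
      have e4 : (1:ℝ) * e ≤ 2 ^ (k+1) * e := by
        refine mul_le_mul_of_nonneg_right ?_ he0
        rw [hq]; nlinarith
      nlinarith [e1, e2, e3, e4]
    calc (a + e) ^ (k + 1) = (a + e) ^ k * (a + e) := h7
      _ ≤ (a ^ k + ((k:ℝ) * 2 ^ k) * e) * (a + e) := h8
      _ ≤ a ^ (k + 1) + (((k:ℝ) + 1) * 2 ^ (k + 1)) * e := h9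
      _ = a ^ (k + 1) + (((k + 1 : ℕ) : ℝ) * 2 ^ (k + 1)) * e := by push_cast; ring

set_option maxHeartbeats 1000000 in
lemma cw_eigen_of_pos (hn : 0 < n) (hm : 1 ≤ m - 1) {T : Tensor m n}
    (hTpos : ∀ i f, 0 < T i f) :
    ∃ z : Fin n → ℝ, (∀ i, 0 < z i) ∧ (∑ i, z i = 1) ∧
      (∀ i, tmul T z i = tstar T * z i ^ (m - 1)) := by
  haveI : Nonempty (Fin n) := ⟨⟨0, hn⟩⟩
  have hT : TNonneg T := fun i f => (hTpos i f).le
  have hbdd := bddAbove_Feas hn hT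
  obtain ⟨z, hz0, hzs, hfe⟩ := tstar_attained hn hT
  set t := tstar T with htdef
  have ht0 : 0 ≤ t := tstar_nonneg hn hT
  set t₀ : Fin (m - 1) := ⟨0, hm⟩ with ht₀
  obtain ⟨j₀, hj₀, hzj₀⟩ := exists_inv_card_le hn hzs hz0
  have hzle1 : ∀ j, z j ≤ 1 := le_one_of_simplex hz0 hzs
  -- Claim A : all entries positive
  have hzpos : ∀ i, 0 < z i := by
    by_contra hc
    push_neg at hc
    obtain ⟨i, hi⟩ := hc
    have hzi : z i = 0 := le_antisymm hi (hz0 i)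
    have hij₀ : j₀ ≠ i := by
      intro h; rw [h, hzi] at hzj₀; exact lt_irrefl _ hzj₀
    set a : ℝ := T i (fun _ => j₀) * z j₀ ^ (m - 1) with ha
    have ha0 : 0 < a := mul_pos (hTpos _ _) (pow_pos hzj₀ _)
    have hIne : (Finset.univ.image fun j : Fin n =>
        T j (fun s => if s = t₀ then i else j₀)).Nonempty :=
      Finset.Nonempty.image Finset.univ_nonempty _
    set γ : ℝ := (Finset.univ.image fun j : Fin n =>
        T j (fun s => if s = t₀ then i else j₀)).min' hIne * ((n:ℝ)⁻¹) ^ (m - 1 - 1)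
      with hγdef
    have hγ0 : 0 < γ := by
      apply mul_pos
      · obtain ⟨j, -, hj⟩ := Finset.mem_image.mp (Finset.min'_mem _ hIne)
        rw [← hj]; exact hTpos _ _
      · positivity
    set ε : ℝ := min 1 (a / (t + γ + 1)) with hεdef
    have hε0 : 0 < ε := lt_min one_pos (div_pos ha0 (by linarith))
    have hε1 : ε ≤ 1 := min_le_left _ _
    set δ : ℝ := γ * ε with hδdef
    have hδ0 : 0 < δ := mul_pos hγ0 hε0
    set z' := Function.update z i ε with hz'def
    have hz'i : z' i = ε := Function.update_self i ε z
    have hz'ne : ∀ j, j ≠ i → z' j = z j := fun j hj => Function.update_of_ne hj ε z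
    have hz'0 : ∀ j, 0 ≤ z' j := by
      intro j; by_cases hj : j = i
      · rw [hj, hz'i]; exact hε0.le
      · rw [hz'ne j hj]; exact hz0 j
    have hzz' : ∀ j, z j ≤ z' j := by
      intro j; by_cases hj : j = i
      · rw [hj, hz'i, hzi]; exact hε0.le
      · rw [hz'ne j hj]
    have hgain : ∀ j, j ≠ i → tmul T z j + γ * ε ≤ tmul T z' j := by
      intro j hj
      have h1 := tmul_gain hT hz0 hzz' j (fun s => if s = t₀ then i else j₀)
      have hp1 : ∏ s, z' (if s = t₀ then i else j₀) = ε * z j₀ ^ (m - 1 - 1) := by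
        rw [prod_ite_point t₀ z' i j₀, hz'i, hz'ne j₀ hij₀]
      have hp2 : ∏ s, z (if s = t₀ then i else j₀) = 0 := by
        rw [prod_ite_point t₀ z i j₀, hzi, zero_mul]
      rw [hp1, hp2, sub_zero] at h1
      refine le_trans ?_ h1
      have hmin : γ ≤ T j (fun s => if s = t₀ then i else j₀) * z j₀ ^ (m - 1 - 1) := by
        rw [hγdef]
        have h2 := Finset.min'_le _ _ (Finset.mem_image_of_mem
          (fun j : Fin n => T j (fun s => if s = t₀ then i else j₀)) (Finset.mem_univ j))
        have h3 : ((n:ℝ)⁻¹) ^ (m - 1 - 1) ≤ z j₀ ^ (m - 1 - 1) :=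
          pow_le_pow_left₀ (by positivity) hj₀ _
        have h4 : 0 < T j (fun s => if s = t₀ then i else j₀) := hTpos _ _
        nlinarith [pow_nonneg (show (0:ℝ) ≤ (n:ℝ)⁻¹ by positivity) (m - 1 - 1)]
      have : γ * ε ≤ (T j (fun s => if s = t₀ then i else j₀) * z j₀ ^ (m-1-1)) * ε :=
        mul_le_mul_of_nonneg_right hmin hε0.le
      linarith
    have hfeas' : ∀ j, (t + δ) * z' j ^ (m - 1) ≤ tmul T z' j := by
      intro j
      by_cases hj : j = i
      · subst hj
        have h4 : a ≤ tmul T z' j := by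
          have h5 := single_term_le_tmul hT hz'0 j (fun _ => j₀)
          rw [Finset.prod_const] at h5
          simp only [Finset.card_univ, Fintype.card_fin] at h5
          rw [hz'ne j₀ hij₀] at h5
          exact h5
        have hεp : ε ^ (m - 1) ≤ ε := by
          calc ε ^ (m - 1) ≤ ε ^ 1 := pow_le_pow_of_le_one hε0.le hε1 hm
            _ = ε := pow_one ε
        have hδγ : δ ≤ γ := by
          rw [hδdef]; nlinarith
        have h5 : (t + δ) * ε ^ (m - 1) ≤ (t + γ) * ε := by
          have : (t + δ) * ε ^ (m - 1) ≤ (t + δ) * ε :=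
            mul_le_mul_of_nonneg_left hεp (by linarith)
          have h6 : (t + δ) * ε ≤ (t + γ) * ε :=
            mul_le_mul_of_nonneg_right (by linarith) hε0.le
          linarith
        have h6 : (t + γ) * ε ≤ a := by
          have hεle : ε ≤ a / (t + γ + 1) := min_le_right _ _
          have hp : (0:ℝ) < t + γ + 1 := by linarith
          have h7 : (t + γ) * ε ≤ (t + γ) * (a / (t + γ + 1)) :=
            mul_le_mul_of_nonneg_left hεle (by linarith)
          have h8 : (t + γ) * (a / (t + γ + 1)) = ((t + γ) / (t + γ + 1)) * a := by
            ring
          have h9 : (t + γ) / (t + γ + 1) ≤ 1 := by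
            rw [div_le_one hp]; linarith
          nlinarith
        rw [hz'i]
        linarith
      · rw [hz'ne j hj]
        have h8 := hgain j hj
        have h9 := hfe j
        have h10 : z j ^ (m - 1) ≤ 1 := pow_le_one₀ (hz0 j) (hzle1 j)
        have h11 : δ * z j ^ (m - 1) ≤ γ * ε := by
          rw [hδdef]
          nlinarith [pow_nonneg (hz0 j) (m - 1)]
        nlinarith
    have hsum' : 0 < ∑ j, z' j := by
      have h1 : z j₀ ≤ ∑ j, z' j := by
        rw [← hz'ne j₀ hij₀]
        exact Finset.single_le_sum (fun j _ => hz'0 j) (Finset.mem_univ j₀)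
      linarith
    have hmem : t + δ ∈ Feas T := mem_Feas_norm (by linarith) hz'0 hsum' hfeas'
    have hle : t + δ ≤ t := le_csSup hbdd hmem
    linarith
  -- Claim B : equality everywhere
  have heq : ∀ i, tmul T z i = t * z i ^ (m - 1) := by
    by_contra hc
    push_neg at hc
    obtain ⟨i₁, hi₁⟩ := hc
    set u : ℝ := tmul T z i₁ - t * z i₁ ^ (m - 1) with hudef
    have hu0 : 0 < u := by
      have := hfe i₁
      rcases lt_or_eq_of_le this with h | h
      · rw [hudef]; linarith
      · exact absurd h.symm hi₁
    have hIne : (Finset.univ.image fun j : Fin n =>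
        T j (fun s => if s = t₀ then i₁ else j) * z j ^ (m - 1 - 1)).Nonempty :=
      Finset.Nonempty.image Finset.univ_nonempty _
    set γ : ℝ := (Finset.univ.image fun j : Fin n =>
        T j (fun s => if s = t₀ then i₁ else j) * z j ^ (m - 1 - 1)).min' hIne
      with hγdef
    have hγ0 : 0 < γ := by
      obtain ⟨j, -, hj⟩ := Finset.mem_image.mp (Finset.min'_mem _ hIne)
      rw [hγdef, ← hj]
      exact mul_pos (hTpos _ _) (pow_pos (hzpos j) _)
    set K : ℝ := ((m - 1 : ℕ) : ℝ) * 2 ^ (m - 1) with hKdef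
    have hK0 : (0:ℝ) ≤ K := by positivity
    have htK : (0:ℝ) ≤ t * K := mul_nonneg ht0 hK0
    set ε : ℝ := min 1 (u / (2 * (t * K + 1))) with hεdef
    have hε0 : 0 < ε := lt_min one_pos (div_pos hu0 (by linarith))
    have hε1 : ε ≤ 1 := min_le_left _ _
    set δ : ℝ := min (γ * ε) (u / (2 * (1 + K))) with hδdef
    have hδ0 : 0 < δ :=
      lt_min (mul_pos hγ0 hε0) (div_pos hu0 (by linarith))
    set z' := Function.update z i₁ (z i₁ + ε) with hz'def
    have hz'i : z' i₁ = z i₁ + ε := Function.update_self i₁ _ z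
    have hz'ne : ∀ j, j ≠ i₁ → z' j = z j := fun j hj => Function.update_of_ne hj _ z
    have hz'0 : ∀ j, 0 ≤ z' j := by
      intro j; by_cases hj : j = i₁
      · rw [hj, hz'i]; have := hz0 i₁; linarith
      · rw [hz'ne j hj]; exact hz0 j
    have hzz' : ∀ j, z j ≤ z' j := by
      intro j; by_cases hj : j = i₁
      · rw [hj, hz'i]; linarith
      · rw [hz'ne j hj]
    have hgain : ∀ j, j ≠ i₁ → tmul T z j + γ * ε ≤ tmul T z' j := by
      intro j hj
      have h1 := tmul_gain hT hz0 hzz' j (fun s => if s = t₀ then i₁ else j)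
      have hp1 : ∏ s, z' (if s = t₀ then i₁ else j) =
          (z i₁ + ε) * z j ^ (m - 1 - 1) := by
        rw [prod_ite_point t₀ z' i₁ j, hz'i, hz'ne j hj]
      have hp2 : ∏ s, z (if s = t₀ then i₁ else j) = z i₁ * z j ^ (m - 1 - 1) :=
        prod_ite_point t₀ z i₁ j
      rw [hp1, hp2] at h1
      have h2 : (z i₁ + ε) * z j ^ (m - 1 - 1) - z i₁ * z j ^ (m - 1 - 1) =
          ε * z j ^ (m - 1 - 1) := by ring
      rw [h2] at h1
      refine le_trans ?_ h1
      have hmin : γ ≤ T j (fun s => if s = t₀ then i₁ else j) * z j ^ (m - 1 - 1) := by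
        rw [hγdef]
        exact Finset.min'_le _ _ (Finset.mem_image_of_mem _ (Finset.mem_univ j))
      have h3 : γ * ε ≤ (T j (fun s => if s = t₀ then i₁ else j) * z j ^ (m-1-1)) * ε :=
        mul_le_mul_of_nonneg_right hmin hε0.le
      have h4 : T j (fun s => if s = t₀ then i₁ else j) * (ε * z j ^ (m - 1 - 1)) =
          (T j (fun s => if s = t₀ then i₁ else j) * z j ^ (m - 1 - 1)) * ε := by ring
      linarith [h4 ▸ (le_refl (T j (fun s => if s = t₀ then i₁ else j) * (ε * z j ^ (m - 1 - 1))))]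
    have hfeas' : ∀ j, (t + δ) * z' j ^ (m - 1) ≤ tmul T z' j := by
      intro j
      by_cases hj : j = i₁
      · subst hj
        rw [hz'i]
        have hKb := pow_add_le_aux (m - 1) (hz0 j) (hzle1 j) hε0.le hε1
        rw [← hKdef] at hKb
        have e1 : t * K * ε ≤ u / 2 := by
          have hεle : ε ≤ u / (2 * (t * K + 1)) := min_le_right _ _
          have hp : (0:ℝ) < 2 * (t * K + 1) := by linarith
          have h7 : t * K * ε ≤ t * K * (u / (2 * (t * K + 1))) :=
            mul_le_mul_of_nonneg_left hεle htK
          have h8 : t * K * (u / (2 * (t * K + 1))) ≤ u / 2 := by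
            rw [mul_div_assoc' (t * K) u _, div_le_div_iff₀ hp two_pos]
            nlinarith
          linarith
        have e2 : δ * (z j ^ (m - 1) + K * ε) ≤ u / 2 := by
          have h9 : z j ^ (m - 1) ≤ 1 := pow_le_one₀ (hz0 j) (hzle1 j)
          have h10 : K * ε ≤ K := by nlinarith [mul_le_mul_of_nonneg_left hε1 hK0]
          have h11 : δ * (z j ^ (m - 1) + K * ε) ≤ δ * (1 + K) :=
            mul_le_mul_of_nonneg_left (by linarith) hδ0.le
          have h12 : δ ≤ u / (2 * (1 + K)) := min_le_right _ _
          have h13 : δ * (1 + K) ≤ (u / (2 * (1 + K))) * (1 + K) :=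
            mul_le_mul_of_nonneg_right h12 (by linarith)
          have h14 : (u / (2 * (1 + K))) * (1 + K) = u / 2 := by
            field_simp
          linarith
        have hmono : tmul T z j ≤ tmul T z' j := tmul_mono_right hT hz0 hzz' j
        have hutmul : tmul T z j = t * z j ^ (m - 1) + u := by rw [hudef]; ring
        have hstep : (t + δ) * (z j + ε) ^ (m - 1) ≤
            (t + δ) * (z j ^ (m - 1) + K * ε) :=
          mul_le_mul_of_nonneg_left hKb (by linarith)
        have hexp : (t + δ) * (z j ^ (m - 1) + K * ε) =
            t * z j ^ (m - 1) + (t * K * ε + δ * (z j ^ (m - 1) + K * ε)) := by ring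
        linarith
      · rw [hz'ne j hj]
        have h8 := hgain j hj
        have h9 := hfe j
        have h10 : z j ^ (m - 1) ≤ 1 := pow_le_one₀ (hz0 j) (hzle1 j)
        have h11 : δ * z j ^ (m - 1) ≤ γ * ε := by
          have h12 : δ ≤ γ * ε := min_le_left _ _
          nlinarith [pow_nonneg (hz0 j) (m - 1)]
        nlinarith
    have hsum' : 0 < ∑ j, z' j := by
      have h1 : z' i₁ ≤ ∑ j, z' j :=
        Finset.single_le_sum (fun j _ => hz'0 j) (Finset.mem_univ i₁)
      rw [hz'i] at h1
      have := hzpos i₁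
      linarith
    have hmem : t + δ ∈ Feas T := mem_Feas_norm (by linarith) hz'0 hsum' hfeas'
    have hle : t + δ ≤ t := le_csSup hbdd hmem
    linarith
  exact ⟨z, hzpos, hzs, heq⟩

def onesT (m n : ℕ) : Tensor m n := fun _ _ => 1

lemma tmul_addconst (T : Tensor m n) (c : ℝ) (z : Fin n → ℝ) (i : Fin n) :
    tmul (fun i f => T i f + c) z i =
      tmul T z i + c * tmul (onesT m n) z i := by
  unfold tmul onesT
  rw [Finset.mul_sum, ← Finset.sum_add_distrib]
  apply Finset.sum_congr rfl
  intro f _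
  ring

set_option maxHeartbeats 1000000 in
lemma approx_eigvec (hn : 0 < n) (hm : 1 ≤ m - 1) {T : Tensor m n}
    (hT : TNonneg T) {ε : ℝ} (hε : 0 < ε) :
    ∃ x : Fin n → ℝ, (∀ i, 0 < x i) ∧ ∃ s : ℝ, 0 ≤ s ∧ s ≤ rho T + ε ∧
      ∀ i, tmul T x i ≤ s * x i ^ (m - 1) := by
  haveI : Nonempty (Fin n) := ⟨⟨0, hn⟩⟩
  set Tk : ℕ → Tensor m n := fun k => fun i f => T i f + 1 / ((k:ℝ) + 1) with hTk
  have hTkpos : ∀ k (i : Fin n) f, 0 < Tk k i f := fun k i f => by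
    have h0 := hT i f
    have h1 : (0:ℝ) < 1 / ((k:ℝ) + 1) := by positivity
    show 0 < T i f + 1 / ((k:ℝ) + 1)
    linarith
  have hTknn : ∀ k, TNonneg (Tk k) := fun k i f => (hTkpos k i f).le
  have hTle : ∀ k (i : Fin n) f, T i f ≤ Tk k i f := fun k i f => by
    have h1 : (0:ℝ) < 1 / ((k:ℝ) + 1) := by positivity
    show T i f ≤ T i f + 1 / ((k:ℝ) + 1)
    linarith
  have hmono_t : Antitone (fun k => tstar (Tk k)) := by
    apply antitone_nat_of_succ_le
    intro k
    apply tstar_mono hn (hTknn (k + 1))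
    intro i f
    have h1 : (1:ℝ) / ((k:ℝ) + 1 + 1) ≤ 1 / ((k:ℝ) + 1) :=
      one_div_le_one_div_of_le (by positivity) (by linarith)
    show T i f + 1 / (((k:ℕ) + 1 : ℕ) + 1 : ℝ) ≤ T i f + 1 / ((k:ℝ) + 1)
    push_cast
    linarith
  have ht0 : ∀ k, 0 ≤ tstar (Tk k) := fun k => tstar_nonneg hn (hTknn k)
  choose zz hzpos hzs hzeq using fun k => cw_eigen_of_pos hn hm (hTkpos k)
  set lam : ℝ := ⨅ k, tstar (Tk k) with hlamdef
  have hlam0 : 0 ≤ lam := le_ciInf ht0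
  have hbddb : BddBelow (Set.range fun k => tstar (Tk k)) := by
    refine ⟨0, ?_⟩
    rintro x ⟨k, rfl⟩
    exact ht0 k
  have hconvt : Filter.Tendsto (fun k => tstar (Tk k)) Filter.atTop (nhds lam) :=
    tendsto_atTop_ciInf hmono_t hbddb
  obtain ⟨zb, hzbΔ, φ, hφ, hconvz⟩ := isCompact_simplex.tendsto_subseq
    (x := fun k => zz k) (fun k => ⟨fun i => (hzpos k i).le, hzs k⟩)
  have hφtop : Filter.Tendsto φ Filter.atTop Filter.atTop := hφ.tendsto_atTop
  have hval : ∀ i, tmul T zb i = lam * zb i ^ (m - 1) := by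
    intro i
    have hL : Filter.Tendsto (fun k => tmul T (zz (φ k)) i) Filter.atTop
        (nhds (tmul T zb i)) := ((tmul_continuous T i).tendsto zb).comp hconvz
    have hinv0 : Filter.Tendsto (fun k : ℕ => 1 / ((φ k : ℝ) + 1)) Filter.atTop
        (nhds 0) := tendsto_one_div_add_atTop_nhds_zero_nat.comp hφtop
    have hE : Filter.Tendsto (fun k => tmul (onesT m n) (zz (φ k)) i)
        Filter.atTop (nhds (tmul (onesT m n) zb i)) :=
      ((tmul_continuous (onesT m n) i).tendsto zb).comp hconvz
    have htt : Filter.Tendsto (fun k => tstar (Tk (φ k))) Filter.atTop (nhds lam) :=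
      hconvt.comp hφtop
    have hzt : Filter.Tendsto (fun k => zz (φ k) i ^ (m - 1)) Filter.atTop
        (nhds (zb i ^ (m - 1))) := (((continuous_apply i).tendsto zb).comp hconvz).pow _
    have hR : Filter.Tendsto
        (fun k => tstar (Tk (φ k)) * zz (φ k) i ^ (m - 1) -
          1 / ((φ k : ℝ) + 1) * tmul (onesT m n) (zz (φ k)) i)
        Filter.atTop (nhds (lam * zb i ^ (m - 1) - 0 * tmul (onesT m n) zb i)) :=
      Filter.Tendsto.sub (htt.mul hzt) (hinv0.mul hE)
    have heqseq : ∀ k, tmul T (zz (φ k)) i =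
        tstar (Tk (φ k)) * zz (φ k) i ^ (m - 1) -
          1 / ((φ k : ℝ) + 1) * tmul (onesT m n) (zz (φ k)) i := by
      intro k
      have h1 := hzeq (φ k) i
      have h2 : tmul (Tk (φ k)) (zz (φ k)) i =
          tmul T (zz (φ k)) i +
            1 / ((φ k : ℝ) + 1) * tmul (onesT m n) (zz (φ k)) i :=
        tmul_addconst T _ _ i
      rw [h2] at h1
      linarith
    have hL2 : Filter.Tendsto (fun k => tmul T (zz (φ k)) i) Filter.atTop
        (nhds (lam * zb i ^ (m - 1) - 0 * tmul (onesT m n) zb i)) :=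
      hR.congr (fun k => (heqseq k).symm)
    have := tendsto_nhds_unique hL hL2
    rw [this]
    ring
  have hzbne : ∃ j, zb j ≠ 0 := by
    by_contra hc
    push_neg at hc
    have : ∑ i, zb i = 0 := Finset.sum_eq_zero fun i _ => hc i
    rw [hzbΔ.2] at this
    norm_num at this
  have hIsE : IsEigenvalue T ((lam : ℝ) : ℂ) := by
    refine ⟨fun j => ((zb j : ℝ) : ℂ), ?_, ?_⟩
    · obtain ⟨j, hj⟩ := hzbne
      intro hzero
      apply hj
      have h2 := congrFun hzero j
      have h3 : ((zb j : ℝ) : ℂ) = 0 := h2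
      exact_mod_cast h3
    · intro i
      rw [tmulC_ofReal, hval i]
      push_cast
      ring
  have hlamrho : lam ≤ rho T := by
    have h1 := abs_le_rho hn hIsE
    rwa [Complex.norm_real, Real.norm_eq_abs, abs_of_nonneg hlam0] at h1
  have hexk : ∃ k, tstar (Tk k) < lam + ε := by
    apply exists_lt_of_ciInf_lt
    rw [← hlamdef]
    linarith
  obtain ⟨k₀, hk₀⟩ := hexk
  refine ⟨zz k₀, hzpos k₀, tstar (Tk k₀), ht0 k₀, by linarith, ?_⟩
  intro i
  have h1 : tmul T (zz k₀) i ≤ tmul (Tk k₀) (zz k₀) i :=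
    tmul_mono_left (hTle k₀) (fun j => (hzpos k₀ j).le) i
  rw [hzeq k₀ i] at h1
  exact h1

end AuxCW

section AuxSpec

variable {m n : ℕ}

lemma mmul_one (T : Tensor m n) : mmul 1 T = T := by
  funext i f
  show ∑ j, (1 : Matrix (Fin n) (Fin n) ℝ) i j * T j f = T i f
  simp [Matrix.one_apply, ite_mul, Finset.sum_ite_eq]

lemma mmul_add_mat (M N : Matrix (Fin n) (Fin n) ℝ) (T : Tensor m n) :
    mmul (M + N) T = mmul M T + mmul N T := by
  funext i f
  show ∑ j, (M i j + N i j) * T j f = (∑ j, M i j * T j f) + ∑ j, N i j * T j f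
  rw [← Finset.sum_add_distrib]
  apply Finset.sum_congr rfl
  intro j _
  ring

lemma mmul_sub_mat (M N : Matrix (Fin n) (Fin n) ℝ) (T : Tensor m n) :
    mmul (M - N) T = mmul M T - mmul N T := by
  funext i f
  show ∑ j, (M i j - N i j) * T j f = (∑ j, M i j * T j f) - ∑ j, N i j * T j f
  rw [← Finset.sum_sub_distrib]
  apply Finset.sum_congr rfl
  intro j _
  ring

lemma mmul_addT (M : Matrix (Fin n) (Fin n) ℝ) (T T' : Tensor m n) :
    mmul M (T + T') = mmul M T + mmul M T' := by
  funext i f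
  show ∑ j, M i j * (T j f + T' j f) = (∑ j, M i j * T j f) + ∑ j, M i j * T' j f
  rw [← Finset.sum_add_distrib]
  apply Finset.sum_congr rfl
  intro j _
  ring

lemma mmul_subT (M : Matrix (Fin n) (Fin n) ℝ) (T T' : Tensor m n) :
    mmul M (T - T') = mmul M T - mmul M T' := by
  funext i f
  show ∑ j, M i j * (T j f - T' j f) = (∑ j, M i j * T j f) - ∑ j, M i j * T' j f
  rw [← Finset.sum_sub_distrib]
  apply Finset.sum_congr rfl
  intro j _
  ring

lemma mmul_mmul (M N : Matrix (Fin n) (Fin n) ℝ) (T : Tensor m n) :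
    mmul M (mmul N T) = mmul (M * N) T := by
  funext i f
  show ∑ j, M i j * ∑ l, N j l * T l f = ∑ l, (M * N) i l * T l f
  simp only [Finset.mul_sum, Matrix.mul_apply, Finset.sum_mul]
  rw [Finset.sum_comm]
  apply Finset.sum_congr rfl
  intro l _
  apply Finset.sum_congr rfl
  intro j _
  ring

lemma maj_mmul (M : Matrix (Fin n) (Fin n) ℝ) (T : Tensor m n) :
    maj (mmul M T) = M * maj T := by
  funext i j
  show ∑ l, M i l * T l (fun _ => j) = _
  rw [Matrix.mul_apply]
  rfl

lemma maj_idT (hm : 1 ≤ m - 1) : maj (idT m n) = 1 := by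
  haveI : Nonempty (Fin (m - 1)) := ⟨⟨0, hm⟩⟩
  funext i j
  show idT m n i (fun _ => j) = (1 : Matrix (Fin n) (Fin n) ℝ) i j
  rw [Matrix.one_apply, idT]
  by_cases h : j = i
  · rw [if_pos (fun _ => h), if_pos h.symm]
  · rw [if_neg, if_neg (fun hc => h hc.symm)]
    intro hc
    exact h (hc (Classical.arbitrary _))

lemma sum_Smat (A : Tensor m n) (α : Fin n → ℝ) (X : Fin n → ℝ) (i : Fin n) :
    ∑ j, Smat A α 1 i j * X j =
      if h : (i:ℕ) + 1 < n then -(α i * maj A i ⟨(i:ℕ)+1, h⟩) * X ⟨(i:ℕ)+1, h⟩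
      else 0 := by
  split_ifs with h
  · rw [Finset.sum_eq_single (⟨(i:ℕ)+1, h⟩ : Fin n)]
    · simp only [Smat]
      simp
    · intro j _ hj
      simp only [Smat]
      rw [if_neg, zero_mul]
      intro hc
      exact hj (Fin.ext hc)
    · intro hmem
      exact absurd (Finset.mem_univ _) hmem
  · apply Finset.sum_eq_zero
    intro j _
    simp only [Smat]
    rw [if_neg, zero_mul]
    intro hc
    exact h (hc ▸ j.isLt)

lemma sum_Kmat (A : Tensor m n) (β : Fin n → ℝ) (X : Fin n → ℝ) (i : Fin n) :
    ∑ j, Kmat A β 1 i j * X j =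
      if 1 ≤ (i:ℕ) then -(β i * maj A i (finShiftDown i 1)) * X (finShiftDown i 1)
      else 0 := by
  have hdval : ((finShiftDown i 1 : Fin n) : ℕ) = (i:ℕ) - 1 := rfl
  split_ifs with h
  · rw [Finset.sum_eq_single (finShiftDown i 1)]
    · simp only [Kmat]
      rw [if_pos (by omega)]
    · intro j _ hj
      simp only [Kmat]
      rw [if_neg, zero_mul]
      intro hc
      apply hj
      apply Fin.ext
      omega
    · intro hmem
      exact absurd (Finset.mem_univ _) hmem
  · apply Finset.sum_eq_zero
    intro j _
    simp only [Kmat]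
    rw [if_neg, zero_mul]
    intro hc
    omega

lemma LF_eq (A : Tensor m n) : Ltens A + Ftens A = idT m n - A := by
  simp only [Ftens]
  abel

lemma F2_eq (A : Tensor m n) (α β : Fin n → ℝ) :
    F2 A α β 1 1 = (idT m n - A) - mmul (Smat A α 1 + Kmat A β 1) A := by
  have h1 : Pmat A α β 1 1 = 1 + (Smat A α 1 + Kmat A β 1) := by
    simp only [Pmat]
    rw [add_assoc]
  simp only [F2]
  rw [h1, LF_eq, mmul_add_mat, mmul_one, mmul_subT]
  abel

lemma F5_eq (A : Tensor m n) (α β : Fin n → ℝ) :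
    F5 A α β = mmul (1 - Smat A α 1 * Kfull A - Kmat A β 1 * Sfull A) (idT m n)
      - mmul (1 + (Smat A α 1 + Kmat A β 1)) A := by
  have h1 : Lprime A + Ftens A = (idT m n - A) - mmul (Kfull A) (idT m n) := by
    simp only [Lprime]
    rw [← LF_eq A]
    abel
  have h2 : Ltens A + Fprime A = (idT m n - A) - mmul (Sfull A) (idT m n) := by
    simp only [Fprime]
    rw [← LF_eq A]
    abel
  simp only [F5]
  rw [LF_eq, h1, h2]
  simp only [mmul_subT, mmul_add_mat, mmul_sub_mat, mmul_one, ← mmul_mmul]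
  abel

lemma SK_apply (A : Tensor m n) (α : Fin n → ℝ) (i j : Fin n) :
    (Smat A α 1 * Kfull A) i j =
      if h : (i:ℕ) + 1 < n then
        (if j = i then α i * maj A i ⟨(i:ℕ)+1, h⟩ * maj A ⟨(i:ℕ)+1, h⟩ i else 0)
      else 0 := by
  rw [Matrix.mul_apply, sum_Smat A α (fun l => Kfull A l j) i]
  split_ifs with h hij
  · subst hij
    simp only [Kfull, Kmat]
    norm_num
  · simp only [Kfull, Kmat]
    rw [if_neg, mul_zero]
    intro hc
    exact hij (Fin.ext (by omega))
  · rfl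

lemma KS_apply (A : Tensor m n) (β : Fin n → ℝ) (i j : Fin n) :
    (Kmat A β 1 * Sfull A) i j =
      if 1 ≤ (i:ℕ) then
        (if j = i then
          β i * maj A i (finShiftDown i 1) * maj A (finShiftDown i 1) i else 0)
      else 0 := by
  rw [Matrix.mul_apply, sum_Kmat A β (fun l => Sfull A l j) i]
  have hdval : ((finShiftDown i 1 : Fin n) : ℕ) = (i:ℕ) - 1 := rfl
  split_ifs with h hij
  · subst hij
    simp only [Sfull, Smat]
    rw [if_pos (by omega)]
    ring
  · simp only [Sfull, Smat]
    rw [if_neg, mul_zero]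
    intro hc
    exact hij (Fin.ext (by omega))
  · rfl

lemma Dm_diag (A : Tensor m n) (α β : Fin n → ℝ) :
    (1 : Matrix (Fin n) (Fin n) ℝ) - Smat A α 1 * Kfull A - Kmat A β 1 * Sfull A =
      Matrix.diagonal (fun i => 1 - condExpr A α β 1 i) := by
  ext i j
  rw [Matrix.sub_apply, Matrix.sub_apply, SK_apply, KS_apply]
  by_cases hij : j = i
  · subst hij
    rw [Matrix.one_apply_eq, Matrix.diagonal_apply_eq]
    simp only [if_pos rfl, condExpr, finShiftUp]
    split_ifs <;> ring
  · rw [Matrix.one_apply_ne (fun hc => hij hc.symm),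
      Matrix.diagonal_apply_ne _ (fun hc => hij hc.symm)]
    simp only [if_neg hij]
    split_ifs <;> norm_num

lemma offdiag_nonpos {A : Tensor m n} (hA : StrongM A) {i : Fin n}
    {f : Fin (m - 1) → Fin n} (hf : f ≠ fun _ => i) : A i f ≤ 0 := by
  obtain ⟨η, B, hB, hρ, hAeq⟩ := hA
  rw [hAeq]
  show η * idT m n i f - B i f ≤ 0
  rw [idT_apply_ne hf]
  have := hB i f
  linarith

lemma maj_offdiag_nonpos (hm : 1 ≤ m - 1) {A : Tensor m n} (hA : StrongM A)
    {i j : Fin n} (hij : j ≠ i) : maj A i j ≤ 0 := by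
  apply offdiag_nonpos hA
  intro hc
  exact hij (congrFun hc ⟨0, hm⟩)

lemma J_nonneg {A : Tensor m n} (hA : StrongM A) (hdiag : UnitDiag A) :
    TNonneg (idT m n - A) := by
  intro i f
  show 0 ≤ idT m n i f - A i f
  by_cases hf : f = fun _ => i
  · subst hf
    rw [hdiag i, idT, if_pos (fun _ => rfl)]
    norm_num
  · rw [idT_apply_ne hf]
    have := offdiag_nonpos hA hf
    linarith

lemma semipos (hn : 0 < n) (hm : 1 ≤ m - 1) {A : Tensor m n} (hA : StrongM A) :
    ∃ x : Fin n → ℝ, (∀ i, 0 < x i) ∧ ∀ i, 0 < tmul A x i := by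
  obtain ⟨η, B, hB, hρ, hAeq⟩ := hA
  have hρ0 : 0 ≤ rho B := rho_nonneg B
  have hεpos : 0 < (η - rho B) / 2 := by linarith
  obtain ⟨x, hx, s, hs0, hsle, hxs⟩ := approx_eigvec hn hm hB hεpos
  refine ⟨x, hx, fun i => ?_⟩
  have h1 : tmul A x i = η * x i ^ (m - 1) - tmul B x i := by
    rw [hAeq, tmul_sub, tmul_smulT, tmul_idT]
  rw [h1]
  have h2 := hxs i
  have h3 : s < η := by linarith
  have h4 : 0 < x i ^ (m - 1) := pow_pos (hx i) _
  nlinarith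

lemma Smat_nonneg (hm : 1 ≤ m - 1) {A : Tensor m n} (hA : StrongM A)
    {α : Fin n → ℝ} (hα : ∀ i : Fin n, (i : ℕ) + 1 < n → α i ∈ Set.Icc (0:ℝ) 1)
    (i j : Fin n) : 0 ≤ Smat A α 1 i j := by
  simp only [Smat]
  split_ifs with h
  · have hjn : (i:ℕ) + 1 < n := h ▸ j.isLt
    have hα0 := (hα i hjn).1
    have hmaj : maj A i j ≤ 0 := maj_offdiag_nonpos hm hA (by
      intro hc
      rw [hc] at h
      omega)
    nlinarith
  · exact le_rfl

lemma Kmat_nonneg (hm : 1 ≤ m - 1) {A : Tensor m n} (hA : StrongM A)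
    {β : Fin n → ℝ} (hβ : ∀ i : Fin n, 1 ≤ (i : ℕ) → β i ∈ Set.Icc (0:ℝ) 1)
    (i j : Fin n) : 0 ≤ Kmat A β 1 i j := by
  simp only [Kmat]
  split_ifs with h
  · have hin : 1 ≤ (i:ℕ) := by omega
    have hβ0 := (hβ i hin).1
    have hmaj : maj A i j ≤ 0 := maj_offdiag_nonpos hm hA (by
      intro hc
      rw [hc] at h
      omega)
    nlinarith
  · exact le_rfl

lemma mmul_Q_apply (A T : Tensor m n) (α β : Fin n → ℝ) (i : Fin n)
    (f : Fin (m - 1) → Fin n) :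
    mmul (Smat A α 1 + Kmat A β 1) T i f =
      (if h : (i:ℕ) + 1 < n then
        -(α i * maj A i ⟨(i:ℕ)+1, h⟩) * T ⟨(i:ℕ)+1, h⟩ f else 0)
      + (if 1 ≤ (i:ℕ) then
        -(β i * maj A i (finShiftDown i 1)) * T (finShiftDown i 1) f else 0) := by
  show ∑ j, (Smat A α 1 + Kmat A β 1) i j * T j f = _
  simp only [Matrix.add_apply]
  have hsplit : ∀ j, (Smat A α 1 i j + Kmat A β 1 i j) * T j f =
      Smat A α 1 i j * T j f + Kmat A β 1 i j * T j f := fun j => by ring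
  rw [Finset.sum_congr rfl (fun j _ => hsplit j), Finset.sum_add_distrib,
    sum_Smat A α (fun j => T j f) i, sum_Kmat A β (fun j => T j f) i]

lemma mmul_diagonal_apply (w : Fin n → ℝ) (T : Tensor m n) (i : Fin n)
    (f : Fin (m - 1) → Fin n) :
    mmul (Matrix.diagonal w) T i f = w i * T i f := by
  show ∑ j, Matrix.diagonal w i j * T j f = _
  rw [Finset.sum_eq_single i]
  · rw [Matrix.diagonal_apply_eq]
  · intro j _ hj
    rw [Matrix.diagonal_apply_ne' _ hj, zero_mul]
  · intro hmem
    exact absurd (Finset.mem_univ _) hmem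

/-- `W = (I + Q) 𝒜` entry at the diagonal position. -/
lemma W_diag (hm : 1 ≤ m - 1) {A : Tensor m n} (hdiag : UnitDiag A)
    (α β : Fin n → ℝ) (i : Fin n) :
    A i (fun _ => i) +
        mmul (Smat A α 1 + Kmat A β 1) A i (fun _ => i) =
      1 - condExpr A α β 1 i := by
  rw [hdiag i, mmul_Q_apply]
  simp only [condExpr, finShiftUp]
  have h1 : ∀ (h : (i:ℕ) + 1 < n),
      A (⟨(i:ℕ)+1, h⟩ : Fin n) (fun _ => i) = maj A ⟨(i:ℕ)+1, h⟩ i := fun _ => rfl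
  have h2 : A (finShiftDown i 1) (fun _ => i) = maj A (finShiftDown i 1) i := rfl
  split_ifs with hu hd hd
  · rw [h1 hu, h2]; ring
  · rw [h1 hu]; ring
  · rw [h2]; ring
  · ring

/-- `W = (I + Q) 𝒜` entries are nonpositive off the diagonal. -/
lemma W_offdiag_nonpos (hm : 1 ≤ m - 1) {A : Tensor m n} (hA : StrongM A)
    (hdiag : UnitDiag A) {α β : Fin n → ℝ}
    (hα : ∀ i : Fin n, (i : ℕ) + 1 < n → α i ∈ Set.Icc (0:ℝ) 1)
    (hβ : ∀ i : Fin n, 1 ≤ (i : ℕ) → β i ∈ Set.Icc (0:ℝ) 1)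
    {i : Fin n} {f : Fin (m - 1) → Fin n} (hf : f ≠ fun _ => i) :
    A i f + mmul (Smat A α 1 + Kmat A β 1) A i f ≤ 0 := by
  have t₀ : Fin (m - 1) := ⟨0, hm⟩
  rw [mmul_Q_apply]
  have hAif : A i f ≤ 0 := offdiag_nonpos hA hf
  -- analyze the up term
  have hup : ∀ (h : (i:ℕ) + 1 < n),
      A i f + -(α i * maj A i ⟨(i:ℕ)+1, h⟩) * A ⟨(i:ℕ)+1, h⟩ f ≤ 0 := by
    intro h
    set u : Fin n := ⟨(i:ℕ)+1, h⟩ with hu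
    have hui : u ≠ i := by
      intro hc
      have := congrArg Fin.val hc
      simp [hu] at this
    have hmaju : maj A i u ≤ 0 := maj_offdiag_nonpos hm hA hui
    have hαi := hα i h
    by_cases hfu : f = fun _ => u
    · subst hfu
      have hAif' : A i (fun _ => u) = maj A i u := rfl
      rw [hAif', hdiag u]
      nlinarith [hαi.1, hαi.2]
    · have hAuf : A u f ≤ 0 := offdiag_nonpos hA hfu
      have hsu : 0 ≤ -(α i * maj A i u) := by nlinarith [hαi.1]
      nlinarith
  have hdn : 1 ≤ (i:ℕ) →
      A i f + -(β i * maj A i (finShiftDown i 1)) * A (finShiftDown i 1) f ≤ 0 := by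
    intro h
    set dn : Fin n := finShiftDown i 1 with hdn'
    have hdnval : (dn : ℕ) = (i:ℕ) - 1 := rfl
    have hdni : dn ≠ i := by
      intro hc
      have := congrArg Fin.val hc
      omega
    have hmajdn : maj A i dn ≤ 0 := maj_offdiag_nonpos hm hA hdni
    have hβi := hβ i h
    by_cases hfd : f = fun _ => dn
    · subst hfd
      have hAif' : A i (fun _ => dn) = maj A i dn := rfl
      rw [hAif', hdiag dn]
      nlinarith [hβi.1, hβi.2]
    · have hAdf : A dn f ≤ 0 := offdiag_nonpos hA hfd
      have hkd : 0 ≤ -(β i * maj A i dn) := by nlinarith [hβi.1]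
      nlinarith
  -- combine: at most one of the two "diagonal hit" scenarios occurs, but we
  -- simply bound each term separately when f matches neither and use hup/hdn
  split_ifs with h1 h2 h2
  · -- both ranges valid
    set u : Fin n := ⟨(i:ℕ)+1, h1⟩ with hu
    set dn : Fin n := finShiftDown i 1 with hdn'
    have hui : u ≠ i := by
      intro hc; have := congrArg Fin.val hc; simp [hu] at this
    have hdni : dn ≠ i := by
      intro hc; have := congrArg Fin.val hc
      have : (dn:ℕ) = (i:ℕ) - 1 := rfl
      omega
    have hmaju : maj A i u ≤ 0 := maj_offdiag_nonpos hm hA hui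
    have hmajdn : maj A i dn ≤ 0 := maj_offdiag_nonpos hm hA hdni
    have hαi := hα i h1
    have hβi := hβ i h2
    have hsu : 0 ≤ -(α i * maj A i u) := by nlinarith [hαi.1]
    have hkd : 0 ≤ -(β i * maj A i dn) := by nlinarith [hβi.1]
    have hudn : u ≠ dn := by
      intro hc; have := congrArg Fin.val hc
      have h3 : (u:ℕ) = (i:ℕ)+1 := rfl
      have h4 : (dn:ℕ) = (i:ℕ) - 1 := rfl
      omega
    by_cases hfu : f = fun _ => u
    · -- down term sees an off-diagonal entry
      have hAdf : A dn f ≤ 0 := by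
        apply offdiag_nonpos hA
        rw [hfu]
        intro hc
        exact hudn (congrFun hc ⟨0, hm⟩)
      have := hup h1
      nlinarith
    · by_cases hfd : f = fun _ => dn
      · have hAuf : A u f ≤ 0 := by
          apply offdiag_nonpos hA
          rw [hfd]
          intro hc
          exact hudn (congrFun hc ⟨0, hm⟩).symm
        have := hdn h2
        nlinarith
      · have hAuf : A u f ≤ 0 := offdiag_nonpos hA hfu
        have hAdf : A dn f ≤ 0 := offdiag_nonpos hA hfd
        nlinarith
  · have := hup h1
    linarith
  · have := hdn h2
    linarith
  · linarith

lemma idT_diag_one (i : Fin n) : idT m n i (fun _ => i) = 1 := by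
  rw [idT, if_pos (fun _ => rfl)]

lemma F2_nonneg (hm : 1 ≤ m - 1) {A : Tensor m n} (hA : StrongM A)
    (hdiag : UnitDiag A) {α β : Fin n → ℝ}
    (hα : ∀ i : Fin n, (i : ℕ) + 1 < n → α i ∈ Set.Icc (0:ℝ) 1)
    (hβ : ∀ i : Fin n, 1 ≤ (i : ℕ) → β i ∈ Set.Icc (0:ℝ) 1)
    (hcond : Cond A α β 1) : TNonneg (F2 A α β 1 1) := by
  rw [F2_eq]
  intro i f
  show 0 ≤ idT m n i f - A i f - mmul (Smat A α 1 + Kmat A β 1) A i f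
  by_cases hf : f = fun _ => i
  · subst hf
    have h1 := W_diag hm hdiag α β i
    have h2 := idT_diag_one (m := m) i
    have h3 := (hcond i).1
    linarith
  · have h1 := W_offdiag_nonpos hm hA hdiag hα hβ hf
    rw [idT_apply_ne hf]
    linarith

lemma H5_nonneg (hm : 1 ≤ m - 1) {A : Tensor m n} (hA : StrongM A)
    (hdiag : UnitDiag A) {α β : Fin n → ℝ}
    (hα : ∀ i : Fin n, (i : ℕ) + 1 < n → α i ∈ Set.Icc (0:ℝ) 1)
    (hβ : ∀ i : Fin n, 1 ≤ (i : ℕ) → β i ∈ Set.Icc (0:ℝ) 1)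
    (hcond : Cond A α β 1) :
    TNonneg (mmul (Matrix.diagonal fun i => (1 - condExpr A α β 1 i)⁻¹)
      (F5 A α β)) := by
  intro i f
  rw [mmul_diagonal_apply]
  have hd : 0 < 1 - condExpr A α β 1 i := by
    have := (hcond i).2
    linarith
  apply mul_nonneg (inv_nonneg.2 hd.le)
  rw [F5_eq]
  show 0 ≤ mmul (1 - Smat A α 1 * Kfull A - Kmat A β 1 * Sfull A) (idT m n) i f
      - mmul (1 + (Smat A α 1 + Kmat A β 1)) A i f
  rw [Dm_diag, mmul_diagonal_apply,
    show mmul (1 + (Smat A α 1 + Kmat A β 1)) A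
        = A + mmul (Smat A α 1 + Kmat A β 1) A by
      rw [mmul_add_mat, mmul_one]]
  show 0 ≤ (1 - condExpr A α β 1 i) * idT m n i f
      - (A i f + mmul (Smat A α 1 + Kmat A β 1) A i f)
  by_cases hf : f = fun _ => i
  · subst hf
    have h1 := W_diag hm hdiag α β i
    have h2 := idT_diag_one (m := m) i
    rw [h2, mul_one]
    linarith
  · have h1 := W_offdiag_nonpos hm hA hdiag hα hβ hf
    rw [idT_apply_ne hf, mul_zero]
    linarith

set_option maxHeartbeats 800000 in
lemma Q_row_bound (hm : 1 ≤ m - 1) {A : Tensor m n} (hA : StrongM A)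
    (hdiag : UnitDiag A) {α β : Fin n → ℝ}
    (hα : ∀ i : Fin n, (i : ℕ) + 1 < n → α i ∈ Set.Icc (0:ℝ) 1)
    (hβ : ∀ i : Fin n, 1 ≤ (i : ℕ) → β i ∈ Set.Icc (0:ℝ) 1)
    {x : Fin n → ℝ} (hx : ∀ i, 0 < x i) (i : Fin n) :
    ∑ j, (Smat A α 1 + Kmat A β 1) i j * x j ^ (m - 1) ≤
      x i ^ (m - 1) - tmul A x i := by
  classical
  set g : (Fin (m - 1) → Fin n) → ℝ := fun f => (-(A i f)) * ∏ t, x (f t) with hg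
  have hgnn : ∀ f ∈ Finset.univ.erase (fun _ => i), 0 ≤ g f := by
    intro f hf
    have h1 : A i f ≤ 0 := offdiag_nonpos hA (Finset.ne_of_mem_erase hf)
    have h2 : 0 ≤ ∏ t, x (f t) := Finset.prod_nonneg fun t _ => (hx _).le
    rw [hg]
    exact mul_nonneg (by linarith) h2
  have hgu : ∀ u' : Fin n, g (fun _ => u') = -(maj A i u') * x u' ^ (m - 1) := by
    intro u'
    rw [hg]
    show -(A i fun _ => u') * ∏ _t : Fin (m - 1), x u' = _
    rw [Finset.prod_const]
    simp only [Finset.card_univ, Fintype.card_fin]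
    rfl
  have hRHS : x i ^ (m - 1) - tmul A x i =
      ∑ f ∈ Finset.univ.erase (fun _ => i), g f := by
    have h1 : tmul A x i = A i (fun _ => i) * ∏ _t : Fin (m - 1), x i +
        ∑ f ∈ Finset.univ.erase (fun _ => i), A i f * ∏ t, x (f t) := by
      unfold tmul
      rw [← Finset.add_sum_erase Finset.univ _ (Finset.mem_univ (fun _ => i))]
    rw [h1, hdiag i, one_mul, Finset.prod_const]
    simp only [Finset.card_univ, Fintype.card_fin]
    rw [show ∑ f ∈ Finset.univ.erase (fun _ => i), g f =
        -∑ f ∈ Finset.univ.erase (fun _ => i), A i f * ∏ t, x (f t) by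
      rw [← Finset.sum_neg_distrib]
      apply Finset.sum_congr rfl
      intro f _
      rw [hg]
      ring]
    ring
  have hL : ∑ j, (Smat A α 1 + Kmat A β 1) i j * x j ^ (m - 1) =
      (if h : (i:ℕ) + 1 < n then
        -(α i * maj A i ⟨(i:ℕ)+1, h⟩) * x (⟨(i:ℕ)+1, h⟩ : Fin n) ^ (m - 1) else 0)
      + (if 1 ≤ (i:ℕ) then
        -(β i * maj A i (finShiftDown i 1)) * x (finShiftDown i 1) ^ (m - 1)
        else 0) := by
    simp only [Matrix.add_apply]
    have hsplit : ∀ j, (Smat A α 1 i j + Kmat A β 1 i j) * x j ^ (m - 1) =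
        Smat A α 1 i j * x j ^ (m - 1) + Kmat A β 1 i j * x j ^ (m - 1) :=
      fun j => by ring
    rw [Finset.sum_congr rfl (fun j _ => hsplit j), Finset.sum_add_distrib,
      sum_Smat A α (fun j => x j ^ (m - 1)) i,
      sum_Kmat A β (fun j => x j ^ (m - 1)) i]
  rw [hL, hRHS]
  split_ifs with h1 h2 h2
  · set u : Fin n := ⟨(i:ℕ)+1, h1⟩ with hu
    set dn : Fin n := finShiftDown i 1 with hdn
    have hui : u ≠ i := by
      intro hc; have := congrArg Fin.val hc; simp [hu] at this
    have hdni : dn ≠ i := by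
      intro hc; have h3 := congrArg Fin.val hc
      have h4 : (dn:ℕ) = (i:ℕ) - 1 := rfl
      omega
    have hudn : u ≠ dn := by
      intro hc; have h3 := congrArg Fin.val hc
      have h4 : (dn:ℕ) = (i:ℕ) - 1 := rfl
      have h5 : (u:ℕ) = (i:ℕ) + 1 := rfl
      omega
    have hmaju : maj A i u ≤ 0 := maj_offdiag_nonpos hm hA hui
    have hmajdn : maj A i dn ≤ 0 := maj_offdiag_nonpos hm hA hdni
    have hαi := hα i h1
    have hβi := hβ i h2
    have hxu : (0:ℝ) ≤ x u ^ (m - 1) := (pow_pos (hx u) _).le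
    have hxd : (0:ℝ) ≤ x dn ^ (m - 1) := (pow_pos (hx dn) _).le
    have hb1 : -(α i * maj A i u) * x u ^ (m - 1) ≤ g (fun _ => u) := by
      rw [hgu u]
      nlinarith [mul_nonneg (mul_nonneg (sub_nonneg.2 hαi.2)
        (neg_nonneg.2 hmaju)) hxu]
    have hb2 : -(β i * maj A i dn) * x dn ^ (m - 1) ≤ g (fun _ => dn) := by
      rw [hgu dn]
      nlinarith [mul_nonneg (mul_nonneg (sub_nonneg.2 hβi.2)
        (neg_nonneg.2 hmajdn)) hxd]
    have hpairne : (fun _ : Fin (m - 1) => u) ≠ (fun _ : Fin (m - 1) => dn) := by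
      intro hc
      exact hudn (congrFun hc ⟨0, hm⟩)
    have hsub : ({(fun _ : Fin (m - 1) => u), (fun _ : Fin (m - 1) => dn)} : Finset _) ⊆
        Finset.univ.erase (fun _ => i) := by
      intro f hf
      rw [Finset.mem_insert, Finset.mem_singleton] at hf
      rcases hf with hf | hf <;> subst hf <;>
        exact Finset.mem_erase.2 ⟨fun hc => (by
          first
          | exact hui (congrFun hc ⟨0, hm⟩)
          | exact hdni (congrFun hc ⟨0, hm⟩)), Finset.mem_univ _⟩
    have hps : g (fun _ : Fin (m - 1) => u) + g (fun _ : Fin (m - 1) => dn) =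
        ∑ f ∈ ({(fun _ : Fin (m - 1) => u), (fun _ : Fin (m - 1) => dn)} : Finset _), g f :=
      (Finset.sum_pair hpairne).symm
    have hle : ∑ f ∈ ({(fun _ : Fin (m - 1) => u), (fun _ : Fin (m - 1) => dn)} : Finset _), g f ≤
        ∑ f ∈ Finset.univ.erase (fun _ => i), g f :=
      Finset.sum_le_sum_of_subset_of_nonneg hsub (fun f hf _ => hgnn f hf)
    linarith
  · set u : Fin n := ⟨(i:ℕ)+1, h1⟩ with hu
    have hui : u ≠ i := by
      intro hc; have := congrArg Fin.val hc; simp [hu] at this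
    have hmaju : maj A i u ≤ 0 := maj_offdiag_nonpos hm hA hui
    have hαi := hα i h1
    have hxu : (0:ℝ) ≤ x u ^ (m - 1) := (pow_pos (hx u) _).le
    have hb1 : -(α i * maj A i u) * x u ^ (m - 1) ≤ g (fun _ => u) := by
      rw [hgu u]
      nlinarith [mul_nonneg (mul_nonneg (sub_nonneg.2 hαi.2)
        (neg_nonneg.2 hmaju)) hxu]
    have hmem : (fun _ : Fin (m - 1) => u) ∈ Finset.univ.erase (fun _ => i) :=
      Finset.mem_erase.2 ⟨fun hc => hui (congrFun hc ⟨0, hm⟩), Finset.mem_univ _⟩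
    have hle := Finset.single_le_sum hgnn hmem
    linarith
  · set dn : Fin n := finShiftDown i 1 with hdn
    have hdni : dn ≠ i := by
      intro hc; have h3 := congrArg Fin.val hc
      have h4 : (dn:ℕ) = (i:ℕ) - 1 := rfl
      omega
    have hmajdn : maj A i dn ≤ 0 := maj_offdiag_nonpos hm hA hdni
    have hβi := hβ i h2
    have hxd : (0:ℝ) ≤ x dn ^ (m - 1) := (pow_pos (hx dn) _).le
    have hb2 : -(β i * maj A i dn) * x dn ^ (m - 1) ≤ g (fun _ => dn) := by
      rw [hgu dn]
      nlinarith [mul_nonneg (mul_nonneg (sub_nonneg.2 hβi.2)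
        (neg_nonneg.2 hmajdn)) hxd]
    have hmem : (fun _ : Fin (m - 1) => dn) ∈ Finset.univ.erase (fun _ => i) :=
      Finset.mem_erase.2 ⟨fun hc => hdni (congrFun hc ⟨0, hm⟩), Finset.mem_univ _⟩
    have hle := Finset.single_le_sum hgnn hmem
    linarith
  · have := Finset.sum_nonneg hgnn
    linarith

lemma sum_one_add_apply (M : Matrix (Fin n) (Fin n) ℝ) (Y : Fin n → ℝ) (i : Fin n) :
    ∑ j, (1 + M) i j * Y j = Y i + ∑ j, M i j * Y j := by
  have h : ∀ j, (1 + M) i j * Y j =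
      (1 : Matrix (Fin n) (Fin n) ℝ) i j * Y j + M i j * Y j := by
    intro j
    rw [Matrix.add_apply, add_mul]
  rw [Finset.sum_congr rfl (fun j _ => h j), Finset.sum_add_distrib]
  congr 1
  simp [Matrix.one_apply, ite_mul, Finset.sum_ite_eq]

lemma det_one_add_unit (hn : 0 < n) {Q : Matrix (Fin n) (Fin n) ℝ}
    (hQ : ∀ i j, 0 ≤ Q i j) {v : Fin n → ℝ} (hv : ∀ i, 0 < v i)
    (hQv : ∀ i, ∑ j, Q i j * v j < v i) : IsUnit (1 + Q).det := by
  haveI : Nonempty (Fin n) := ⟨⟨0, hn⟩⟩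
  rw [isUnit_iff_ne_zero]
  intro hdet
  obtain ⟨u, hu0, hmu⟩ := Matrix.exists_mulVec_eq_zero_iff.mpr hdet
  rw [Matrix.add_mulVec, Matrix.one_mulVec] at hmu
  obtain ⟨i₀, -, hmax⟩ := Finset.exists_max_image Finset.univ
    (fun i => |u i| / v i) Finset.univ_nonempty
  set c : ℝ := |u i₀| / v i₀ with hcdef
  have hcv : ∀ j, |u j| ≤ c * v j := by
    intro j
    have h1 := hmax j (Finset.mem_univ j)
    calc |u j| = |u j| / v j * v j := (div_mul_cancel₀ _ (hv j).ne').symm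
      _ ≤ c * v j := mul_le_mul_of_nonneg_right h1 (hv j).le
  have hc0 : 0 < c := by
    obtain ⟨j, hj⟩ := Function.ne_iff.mp hu0
    have h1 : 0 < |u j| := abs_pos.2 hj
    have h2 := hmax j (Finset.mem_univ j)
    have h3 : 0 < |u j| / v j := div_pos h1 (hv j)
    linarith
  have h1 : u i₀ + ∑ j, Q i₀ j * u j = 0 := by
    have h2 := congrFun hmu i₀
    simpa [Matrix.mulVec, dotProduct] using h2
  have h2 : |u i₀| ≤ ∑ j, Q i₀ j * |u j| := by
    have h3 : u i₀ = -∑ j, Q i₀ j * u j := by linarith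
    rw [h3, abs_neg]
    refine (Finset.abs_sum_le_sum_abs _ _).trans ?_
    apply Finset.sum_le_sum
    intro j _
    rw [abs_mul, abs_of_nonneg (hQ i₀ j)]
  have h3 : ∑ j, Q i₀ j * |u j| ≤ c * ∑ j, Q i₀ j * v j := by
    rw [Finset.mul_sum]
    apply Finset.sum_le_sum
    intro j _
    calc Q i₀ j * |u j| ≤ Q i₀ j * (c * v j) :=
        mul_le_mul_of_nonneg_left (hcv j) (hQ i₀ j)
      _ = c * (Q i₀ j * v j) := by ring
  have h4 : c * ∑ j, Q i₀ j * v j < c * v i₀ :=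
    mul_lt_mul_of_pos_left (hQv i₀) hc0
  have h5 : |u i₀| = c * v i₀ := by
    rw [hcdef, div_mul_cancel₀ _ (hv i₀).ne']
  linarith

end AuxSpec
set_option maxHeartbeats 1000000 in
theorem stmt6 {m n : ℕ} (hm : 2 ≤ m) (hn : 2 ≤ n)
    (A : Tensor m n) (hA : StrongM A) (hdiag : UnitDiag A)
    (α β : Fin n → ℝ)
    (hα : ∀ i : Fin n, (i : ℕ) + 1 < n → α i ∈ Set.Icc (0 : ℝ) 1)
    (hβ : ∀ i : Fin n, 1 ≤ (i : ℕ) → β i ∈ Set.Icc (0 : ℝ) 1)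
    (hcond : Cond A α β 1) :
    rho (mmul (maj (E5 A α β))⁻¹ (F5 A α β)) ≤
      rho (mmul (maj (idT m n))⁻¹ (F2 A α β 1 1)) ∧
    rho (mmul (maj (idT m n))⁻¹ (F2 A α β 1 1)) ≤
      rho (mmul (maj (E1 A α β 1 1))⁻¹ (F1 A α β 1 1)) := by
  have hm1 : 1 ≤ m - 1 := by omega
  have hn0 : 0 < n := by omega
  haveI : Nonempty (Fin (m - 1)) := ⟨⟨0, hm1⟩⟩
  haveI : Nonempty (Fin n) := ⟨⟨0, hn0⟩⟩
  obtain ⟨x₀, hx₀, hAx₀⟩ := semipos hn0 hm1 hA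
  have hQnn : ∀ i j, 0 ≤ (Smat A α 1 + Kmat A β 1) i j := fun i j =>
    add_nonneg (Smat_nonneg hm1 hA hα i j) (Kmat_nonneg hm1 hA hβ i j)
  have hvpos : ∀ i, 0 < x₀ i ^ (m - 1) := fun i => pow_pos (hx₀ i) _
  have hQv : ∀ i, ∑ j, (Smat A α 1 + Kmat A β 1) i j * x₀ j ^ (m - 1) <
      x₀ i ^ (m - 1) := fun i =>
    lt_of_le_of_lt (Q_row_bound hm1 hA hdiag hα hβ hx₀ i)
      (by linarith [hAx₀ i])
  -- Jacobi tensor facts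
  have hJnn : TNonneg (idT m n - A) := J_nonneg hA hdiag
  have htmulJ : ∀ (x : Fin n → ℝ) (i : Fin n),
      tmul (idT m n - A) x i = x i ^ (m - 1) - tmul A x i := by
    intro x i
    rw [tmul_sub, tmul_idT]
  have hrhoJ : rho (idT m n - A) < 1 := by
    obtain ⟨i₀, -, hmax⟩ := Finset.exists_max_image Finset.univ
      (fun i => tmul (idT m n - A) x₀ i / x₀ i ^ (m - 1)) Finset.univ_nonempty
    have hμlt : tmul (idT m n - A) x₀ i₀ / x₀ i₀ ^ (m - 1) < 1 := by
      rw [div_lt_one (hvpos i₀), htmulJ]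
      linarith [hAx₀ i₀]
    have hbound : ∀ i, tmul (idT m n - A) x₀ i ≤
        (tmul (idT m n - A) x₀ i₀ / x₀ i₀ ^ (m - 1)) * x₀ i ^ (m - 1) := by
      intro i
      have h1 := hmax i (Finset.mem_univ i)
      calc tmul (idT m n - A) x₀ i
          = tmul (idT m n - A) x₀ i / x₀ i ^ (m - 1) * x₀ i ^ (m - 1) :=
            (div_mul_cancel₀ _ (hvpos i).ne').symm
        _ ≤ _ := mul_le_mul_of_nonneg_right h1 (hvpos i).le
    exact lt_of_le_of_lt (rho_le_of_pos_vec hn0 hJnn hx₀ hbound) hμlt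
  -- rewrite the three iteration tensors
  have hE2 : mmul (maj (idT m n))⁻¹ (F2 A α β 1 1) = F2 A α β 1 1 := by
    have hone : (1 : Matrix (Fin n) (Fin n) ℝ)⁻¹ = 1 :=
      Matrix.inv_eq_right_inv (by rw [one_mul])
    rw [maj_idT hm1, hone, mmul_one]
  have hPmat : Pmat A α β 1 1 = 1 + (Smat A α 1 + Kmat A β 1) := by
    simp only [Pmat]
    rw [add_assoc]
  have hPu : IsUnit (Pmat A α β 1 1).det := by
    rw [hPmat]
    exact det_one_add_unit hn0 hQnn hvpos hQv
  have hE1 : mmul (maj (E1 A α β 1 1))⁻¹ (F1 A α β 1 1) = idT m n - A := by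
    have h1 : maj (E1 A α β 1 1) = Pmat A α β 1 1 := by
      simp only [E1]
      rw [maj_mmul, maj_idT hm1, mul_one]
    simp only [F1]
    rw [h1, mmul_mmul, Matrix.nonsing_inv_mul _ hPu, mmul_one, LF_eq]
  -- F2 facts
  have hF2nn := F2_nonneg hm1 hA hdiag hα hβ hcond
  have htmulF2 : ∀ (x : Fin n → ℝ) (i : Fin n), tmul (F2 A α β 1 1) x i =
      x i ^ (m - 1) - tmul A x i -
        ∑ j, (Smat A α 1 + Kmat A β 1) i j * tmul A x j := by
    intro x i
    rw [F2_eq, tmul_sub, tmul_sub, tmul_idT, tmul_mmul]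
  -- middle ≤ right
  have step2 : rho (F2 A α β 1 1) ≤ rho (idT m n - A) := by
    apply le_of_forall_pos_le_add
    intro ε hε
    have hε'0 : 0 < min ε ((1 - rho (idT m n - A)) / 2) :=
      lt_min hε (by linarith)
    obtain ⟨x, hx, s, hs0, hsle, hxs⟩ := approx_eigvec hn0 hm1 hJnn hε'0
    have hs1 : s < 1 := by
      have h1 : min ε ((1 - rho (idT m n - A)) / 2) ≤
          (1 - rho (idT m n - A)) / 2 := min_le_right _ _
      linarith
    have key : ∀ i, tmul (F2 A α β 1 1) x i ≤ s * x i ^ (m - 1) := by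
      intro i
      rw [htmulF2]
      have hAx : ∀ j, (1 - s) * x j ^ (m - 1) ≤ tmul A x j := by
        intro j
        have h2 := hxs j
        rw [htmulJ] at h2
        linarith
      have hQ1 : (1 - s) * ∑ j, (Smat A α 1 + Kmat A β 1) i j * x j ^ (m - 1) ≤
          ∑ j, (Smat A α 1 + Kmat A β 1) i j * tmul A x j := by
        rw [Finset.mul_sum]
        apply Finset.sum_le_sum
        intro j _
        calc (1 - s) * ((Smat A α 1 + Kmat A β 1) i j * x j ^ (m - 1))
            = (Smat A α 1 + Kmat A β 1) i j * ((1 - s) * x j ^ (m - 1)) := by ring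
          _ ≤ (Smat A α 1 + Kmat A β 1) i j * tmul A x j :=
              mul_le_mul_of_nonneg_left (hAx j) (hQnn i j)
      have hQ0 : 0 ≤ ∑ j, (Smat A α 1 + Kmat A β 1) i j * x j ^ (m - 1) :=
        Finset.sum_nonneg fun j _ => mul_nonneg (hQnn i j) (pow_pos (hx j) _).le
      have h3 := hxs i
      rw [htmulJ] at h3
      nlinarith [mul_nonneg (by linarith : (0:ℝ) ≤ 1 - s) hQ0]
    have h4 := rho_le_of_pos_vec hn0 hF2nn hx key
    have h5 : min ε ((1 - rho (idT m n - A)) / 2) ≤ ε := min_le_left _ _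
    linarith
  -- diagonal facts for E5
  have hd0 : ∀ i, 0 < 1 - condExpr A α β 1 i := fun i => by
    have := (hcond i).2
    linarith
  have hd1 : ∀ i, 1 - condExpr A α β 1 i ≤ 1 := fun i => by
    have := (hcond i).1
    linarith
  have hmajE5 : maj (E5 A α β) =
      Matrix.diagonal (fun i => 1 - condExpr A α β 1 i) := by
    simp only [E5]
    rw [maj_mmul, maj_idT hm1, mul_one, Dm_diag]
  have hinvd : (Matrix.diagonal (fun i => 1 - condExpr A α β 1 i))⁻¹ =
      Matrix.diagonal (fun i => (1 - condExpr A α β 1 i)⁻¹) := by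
    apply Matrix.inv_eq_right_inv
    rw [Matrix.diagonal_mul_diagonal]
    rw [show (fun i => (1 - condExpr A α β 1 i) * (1 - condExpr A α β 1 i)⁻¹)
        = fun _ => (1:ℝ) from funext fun i => mul_inv_cancel₀ (hd0 i).ne']
    exact Matrix.diagonal_one
  have hH5nn := H5_nonneg hm1 hA hdiag hα hβ hcond
  have hrhoF2lt1 : rho (F2 A α β 1 1) < 1 := lt_of_le_of_lt step2 hrhoJ
  -- left ≤ middle
  have step1 : rho (mmul (Matrix.diagonal fun i => (1 - condExpr A α β 1 i)⁻¹)
      (F5 A α β)) ≤ rho (F2 A α β 1 1) := by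
    apply le_of_forall_pos_le_add
    intro ε hε
    have hε'0 : 0 < min ε ((1 - rho (F2 A α β 1 1)) / 2) :=
      lt_min hε (by linarith)
    obtain ⟨x, hx, s, hs0, hsle, hxs⟩ := approx_eigvec hn0 hm1 hF2nn hε'0
    have hs1 : s < 1 := by
      have h1 : min ε ((1 - rho (F2 A α β 1 1)) / 2) ≤
          (1 - rho (F2 A α β 1 1)) / 2 := min_le_right _ _
      linarith
    have key : ∀ i, tmul (mmul (Matrix.diagonal fun i =>
        (1 - condExpr A α β 1 i)⁻¹) (F5 A α β)) x i ≤ s * x i ^ (m - 1) := by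
      intro i
      rw [tmul_mmul]
      have hdiagsum : ∀ (Y : Fin n → ℝ),
          ∑ j, Matrix.diagonal (fun i => (1 - condExpr A α β 1 i)⁻¹) i j * Y j
            = (1 - condExpr A α β 1 i)⁻¹ * Y i := by
        intro Y
        rw [Finset.sum_eq_single i]
        · rw [Matrix.diagonal_apply_eq]
        · intro j _ hj
          rw [Matrix.diagonal_apply_ne' _ hj, zero_mul]
        · intro hmem
          exact absurd (Finset.mem_univ _) hmem
      rw [hdiagsum]
      have hsum1 : ∀ (Y : Fin n → ℝ),
          ∑ j, (1 + (Smat A α 1 + Kmat A β 1)) i j * Y j =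
            Y i + ∑ j, (Smat A α 1 + Kmat A β 1) i j * Y j := fun Y =>
        sum_one_add_apply _ Y i
      have hF5x : tmul (F5 A α β) x i =
          (1 - condExpr A α β 1 i) * x i ^ (m - 1) -
            (tmul A x i + ∑ j, (Smat A α 1 + Kmat A β 1) i j * tmul A x j) := by
        rw [F5_eq, tmul_sub, tmul_mmul, tmul_mmul, Dm_diag, hsum1]
        have hdsum : ∑ j, Matrix.diagonal (fun i => 1 - condExpr A α β 1 i) i j *
            tmul (idT m n) x j = (1 - condExpr A α β 1 i) * x i ^ (m - 1) := by
          rw [Finset.sum_eq_single i]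
          · rw [Matrix.diagonal_apply_eq, tmul_idT]
          · intro j _ hj
            rw [Matrix.diagonal_apply_ne' _ hj, zero_mul]
          · intro hmem
            exact absurd (Finset.mem_univ _) hmem
        rw [hdsum]
      rw [hF5x]
      have hF2x := hxs i
      rw [htmulF2] at hF2x
      have hinvpos : 0 < (1 - condExpr A α β 1 i)⁻¹ := inv_pos.2 (hd0 i)
      have hinv1 : 1 ≤ (1 - condExpr A α β 1 i)⁻¹ := by
        have h6 := mul_inv_cancel₀ (hd0 i).ne'
        nlinarith [mul_nonneg (sub_nonneg.2 (hd1 i)) hinvpos.le]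
      have hW : (1 - s) * x i ^ (m - 1) ≤
          tmul A x i + ∑ j, (Smat A α 1 + Kmat A β 1) i j * tmul A x j := by
        linarith
      have hXnn : (0:ℝ) ≤ x i ^ (m - 1) := (pow_pos (hx i) _).le
      have h7 := mul_inv_cancel₀ (hd0 i).ne'
      have h8 : (1 - condExpr A α β 1 i)⁻¹ * ((1 - s) * x i ^ (m - 1)) ≤
          (1 - condExpr A α β 1 i)⁻¹ *
            (tmul A x i + ∑ j, (Smat A α 1 + Kmat A β 1) i j * tmul A x j) :=
        mul_le_mul_of_nonneg_left hW hinvpos.le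
      have h9 : (1 - s) * x i ^ (m - 1) ≤
          (1 - condExpr A α β 1 i)⁻¹ * ((1 - s) * x i ^ (m - 1)) := by
        nlinarith [mul_nonneg (mul_nonneg (by linarith : (0:ℝ) ≤ 1 - s) hXnn)
          (by linarith : (0:ℝ) ≤ (1 - condExpr A α β 1 i)⁻¹ - 1)]
      nlinarith
    have h4 := rho_le_of_pos_vec hn0 hH5nn hx key
    have h5 : min ε ((1 - rho (F2 A α β 1 1)) / 2) ≤ ε := min_le_left _ _
    linarith
  constructor
  · rw [hE2, hmajE5, hinvd]
    exact step1
  · rw [hE2, hE1]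
    exact step2

end

end MultilinearPaper
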